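/- arXiv:1601.08002 — 7 statements merged into one kernel-verified Lean document; each statement's English description precedes it below -/
import Mathlib

section
/- Fix an integer k > k* (used as the threshold index for all n with n > k) and fix an index j ∉ K*. Then for every ε > 0, lim_{n→∞} P[ α̂_j < 2 − ε ] = 0. -/
/-!
For `i ∉ K*` the variable `c̃ᵢ` is standard normal. Fix a large `T`, so that `|c̃ⱼ| ≤ T` with
probability close to one, and put `s = |1 - ε| T`. Split the null indices `(max K*, n]` into
`k + 1` consecutive blocks of length `g ≈ n / (k + 1)`; by independence, a block lies entirely
inside `(-s, s)` with probability `γ(-s, s) ^ g → 0`, where `γ` is the standard Gaussian. Outside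
these events every block contributes an index with `|c̃ᵢ| ≥ s`, so at least `k + 1` of the values
`|c̃ᵢ|` are `≥ s`, hence `θ̃_k ≥ s ≥ (1 - ε) |c̃ⱼ|` and `α̂ⱼ ≥ 2 - ε`.
-/

open MeasureTheory ProbabilityTheory Filter Real
open scoped ENNReal NNReal Topology

theorem AntitoneOn.le_apply_succ_of_lt_card {β : Type*} [LinearOrder β] {f : ℕ → β} {q : ℕ → ℕ}
    {n k : ℕ} {s : β} (hf : AntitoneOn (f ∘ q) (Set.Icc 1 n))
    (hq : Set.SurjOn q (Set.Icc 1 n) (Set.Icc 1 n)) {S : Finset ℕ}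
    (hSn : (S : Set ℕ) ⊆ Set.Icc 1 n) (hS : k < S.card) (hs : ∀ i ∈ S, s ≤ f i) :
    s ≤ f (q (k + 1)) := by
  by_contra! hlt
  have hsub : S ⊆ (Finset.Icc 1 k).image q := by
    intro i hi
    obtain ⟨l, hl, rfl⟩ := hq (hSn hi)
    refine Finset.mem_image_of_mem q (Finset.mem_Icc.2 ⟨hl.1, ?_⟩)
    by_contra! hkl
    have hle : f (q l) ≤ f (q (k + 1)) := hf ⟨Nat.le_add_left 1 k, hkl.trans_le hl.2⟩ hl hkl
    exact (hs _ hi).not_gt (hle.trans_lt hlt)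
  have := (Finset.card_le_card hsub).trans Finset.card_image_le
  simp only [Nat.card_Icc, add_tsub_cancel_right] at this
  omega

theorem Nat.Ioc_subset_Icc_one (m n : ℕ) : Finset.Ioc m n ⊆ Finset.Icc 1 n := by
  intro i hi
  simp only [Finset.mem_Ioc, Finset.mem_Icc] at hi ⊢
  omega

def intervalBlock (m g t : ℕ) : Finset ℕ :=
  Finset.Ioc (m + t * g) (m + (t + 1) * g)

theorem card_intervalBlock (m g t : ℕ) : (intervalBlock m g t).card = g := by
  simp only [intervalBlock, Nat.card_Ioc, add_mul, one_mul]
  omega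

theorem intervalBlock_subset_Ioc {m g t k n : ℕ} (ht : t < k + 1) (hg : (k + 1) * g ≤ n - m) :
    intervalBlock m g t ⊆ Finset.Ioc m n := by
  intro i hi
  have : (t + 1) * g ≤ (k + 1) * g := Nat.mul_le_mul_right _ ht
  simp only [intervalBlock, Finset.mem_Ioc] at hi ⊢
  omega

theorem eq_of_mem_intervalBlock {m g t u i : ℕ} (ht : i ∈ intervalBlock m g t)
    (hu : i ∈ intervalBlock m g u) : t = u := by
  simp only [intervalBlock, Finset.mem_Ioc] at ht hu
  by_contra! htu
  rcases htu.lt_or_gt with h | h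
  · have : (t + 1) * g ≤ u * g := Nat.mul_le_mul_right _ h
    omega
  · have : (u + 1) * g ≤ t * g := Nat.mul_le_mul_right _ h
    omega

theorem lt_card_of_forall_intervalBlock {m g k : ℕ} {S : Finset ℕ}
    (h : ∀ t < k + 1, ∃ i ∈ S, i ∈ intervalBlock m g t) : k < S.card := by
  choose! f hfS hfblock using h
  have hinj : Set.InjOn f (Finset.range (k + 1)) := fun t ht u hu htu =>
    eq_of_mem_intervalBlock (hfblock t (by simpa using ht)) (htu ▸ hfblock u (by simpa using hu))
  have := Finset.card_le_card_of_injOn f (fun t ht => hfS t (by simpa using ht)) hinj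
  simpa using this

theorem ProbabilityTheory.iIndepFun.measure_biInter_preimage_eq_pow {ι Ω β : Type*}
    [MeasurableSpace Ω] [MeasurableSpace β] {μ : Measure Ω} {ν : Measure β} {s t : Finset ι}
    {X : ι → Ω → β}
    (h : iIndepFun (fun i : s => X i) μ) (hts : t ⊆ s) (hX : ∀ i ∈ t, Measurable (X i))
    (hlaw : ∀ i ∈ t, μ.map (X i) = ν) {A : Set β} (hA : MeasurableSet A) :
    μ (⋂ i ∈ t, X i ⁻¹' A) = ν A ^ t.card := by
  have ht := (h.precomp (g := Set.inclusion hts) (Set.inclusion_injective hts))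
    |>.measure_inter_preimage_eq_mul Finset.univ (sets := fun _ => A) (fun _ _ => hA)
  have hfactor : ∀ i : t, μ (X i ⁻¹' A) = ν A := fun i => by
    rw [← Measure.map_apply (hX i i.2) hA, hlaw i i.2]
  simp only [Finset.mem_univ, Set.iInter_true] at ht
  rw [← Set.iInter_subtype (· ∈ t) (fun i => X i ⁻¹' A)]
  simpa [hfactor] using ht

section

variable {Ω : Type*} [MeasurableSpace Ω] {μ : Measure Ω} {ν : Measure ℝ}

theorem measure_abs_apply_succ_lt_le {X : ℕ → Ω → ℝ} {q : Ω → ℕ → ℕ} {m n k : ℕ}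
    (hX : ∀ i ∈ Finset.Ioc m n, Measurable (X i))
    (hind : iIndepFun (fun i : Finset.Icc 1 n => X i) μ)
    (hlaw : ∀ i ∈ Finset.Ioc m n, μ.map (X i) = ν)
    (hq : ∀ᵐ ω ∂μ, Set.SurjOn (q ω) (Set.Icc 1 n) (Set.Icc 1 n) ∧
      AntitoneOn (fun l => |X (q ω l) ω|) (Set.Icc 1 n)) (s : ℝ) :
    μ {ω | |X (q ω (k + 1)) ω| < s} ≤ (k + 1) * ν {x | |x| < s} ^ ((n - m) / (k + 1)) := by
  set g := (n - m) / (k + 1)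
  have hg : (k + 1) * g ≤ n - m := Nat.mul_div_le _ _
  have hblock : ∀ t < k + 1,
      μ (⋂ i ∈ intervalBlock m g t, X i ⁻¹' {x | |x| < s}) = ν {x | |x| < s} ^ g := by
    intro t ht
    have hsub := intervalBlock_subset_Ioc ht hg
    rw [hind.measure_biInter_preimage_eq_pow (hsub.trans (Nat.Ioc_subset_Icc_one m n))
      (fun i hi => hX i (hsub hi)) (fun i hi => hlaw i (hsub hi))
      (measurableSet_lt measurable_abs measurable_const), card_intervalBlock]
  calc μ {ω | |X (q ω (k + 1)) ω| < s}
      ≤ μ (⋃ t ∈ Finset.range (k + 1), ⋂ i ∈ intervalBlock m g t, X i ⁻¹' {x | |x| < s}) := by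
        refine measure_mono_ae (hq.mono fun ω ⟨hsurj, hanti⟩ (hθ : _ < s) => ?_)
        change ω ∈ ⋃ t ∈ Finset.range (k + 1), _
        by_contra hω
        simp only [Set.mem_iUnion, Set.mem_iInter, Set.mem_preimage, Set.mem_ofPred_eq,
          Finset.mem_range, not_exists, not_forall, not_lt] at hω
        have hcard : k < ((Finset.Ioc m n).filter fun i => s ≤ |X i ω|).card :=
          lt_card_of_forall_intervalBlock fun t ht => by
            obtain ⟨i, hi, hsi⟩ := hω t ht
            exact ⟨i, Finset.mem_filter.2 ⟨intervalBlock_subset_Ioc ht hg hi, hsi⟩, hi⟩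
        refine hθ.not_ge (hanti.le_apply_succ_of_lt_card (f := fun i => |X i ω|) hsurj
          (fun i hi => ?_) hcard fun i hi => (Finset.mem_filter.1 hi).2)
        exact Finset.mem_Icc.1 (Nat.Ioc_subset_Icc_one m n (Finset.mem_filter.1 hi).1)
    _ ≤ ∑ t ∈ Finset.range (k + 1), μ (⋂ i ∈ intervalBlock m g t, X i ⁻¹' {x | |x| < s}) :=
        measure_biUnion_finset_le _ _
    _ = (k + 1) * ν {x | |x| < s} ^ g := by
        rw [Finset.sum_congr rfl fun t ht => hblock t (Finset.mem_range.1 ht)]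
        simp

theorem tendsto_measure_abs_apply_succ_lt {X : ℕ → ℕ → Ω → ℝ} {q : ℕ → Ω → ℕ → ℕ} {m k : ℕ}
    {s : ℝ} (hX : ∀ n, m < n → ∀ i ∈ Finset.Ioc m n, Measurable (X n i))
    (hind : ∀ n, m < n → iIndepFun (fun i : Finset.Icc 1 n => X n i) μ)
    (hlaw : ∀ n, m < n → ∀ i ∈ Finset.Ioc m n, μ.map (X n i) = ν)
    (hq : ∀ n, m < n → ∀ᵐ ω ∂μ, Set.SurjOn (q n ω) (Set.Icc 1 n) (Set.Icc 1 n) ∧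
      AntitoneOn (fun l => |X n (q n ω l) ω|) (Set.Icc 1 n))
    (hs : ν {x | |x| < s} < 1) :
    Tendsto (fun n => μ {ω | |X n (q n ω (k + 1)) ω| < s}) atTop (𝓝 0) := by
  have hpow : Tendsto (fun n => (k + 1 : ℝ≥0∞) * ν {x | |x| < s} ^ ((n - m) / (k + 1)))
      atTop (𝓝 0) := by
    have hexp := (Nat.tendsto_div_const_atTop k.succ_ne_zero).comp (tendsto_sub_atTop_nat m)
    simpa using ENNReal.Tendsto.const_mul
      ((ENNReal.tendsto_pow_atTop_nhds_zero_of_lt_one hs).comp hexp) (Or.inr (by simp))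
  refine tendsto_of_tendsto_of_tendsto_of_le_of_le' tendsto_const_nhds hpow
    (Eventually.of_forall fun _ => zero_le) ?_
  filter_upwards [eventually_gt_atTop m] with n hn
  exact measure_abs_apply_succ_lt_le (hX n hn) (hind n hn) (hlaw n hn) (hq n hn) s

theorem measure_ite_one_add_div_lt_le (μ : Measure Ω) (Y θ : Ω → ℝ) (α M T : ℝ) :
    μ {ω | (if Y ω = 0 then α else 1 + θ ω / |Y ω|) < M} ≤
      μ {ω | Y ω = 0} + μ {ω | T < |Y ω|} + μ {ω | θ ω < |M - 1| * T} := by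
  refine (measure_mono ?_).trans
    ((measure_union_le _ _).trans (add_le_add_left (measure_union_le _ _) _))
  intro ω hω
  simp only [Set.mem_union, Set.mem_ofPred_eq] at hω ⊢
  by_contra! h
  obtain ⟨⟨hY0, hYT⟩, hθ⟩ := h
  rw [if_neg hY0] at hω
  have hY : 0 < |Y ω| := abs_pos.2 hY0
  have : M - 1 ≤ θ ω / |Y ω| := by
    rw [le_div_iff₀ hY]
    calc (M - 1) * |Y ω| ≤ |M - 1| * T := mul_le_mul (le_abs_self _) hYT hY.le (abs_nonneg _)
      _ ≤ θ ω := hθ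
  linarith

theorem measure_ite_one_add_div_lt_le_of_map {Y : Ω → ℝ} (hY : Measurable Y)
    (hYlaw : μ.map Y = ν) (hν : ν {0} = 0) (θ : Ω → ℝ) (α M T : ℝ) :
    μ {ω | (if Y ω = 0 then α else 1 + θ ω / |Y ω|) < M} ≤
      ν {x | T < |x|} + μ {ω | θ ω < |M - 1| * T} := by
  have hzero : μ {ω | Y ω = 0} = 0 := by
    rw [← hν, ← hYlaw, Measure.map_apply hY (measurableSet_singleton 0)]
    rfl
  have htail : μ {ω | T < |Y ω|} = ν {x | T < |x|} := by
    rw [← hYlaw, Measure.map_apply hY (measurableSet_lt measurable_const measurable_abs)]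
    rfl
  simpa only [hzero, htail, zero_add] using measure_ite_one_add_div_lt_le μ Y θ α M T

end

theorem tendsto_measure_abs_gt (ν : Measure ℝ) [IsFiniteMeasure ν] :
    Tendsto (fun T : ℝ => ν {x | T < |x|}) atTop (𝓝 0) := by
  simpa using tendsto_measure_norm_gt_of_isTightMeasureSet (isTightMeasureSet_singleton (μ := ν))

theorem gaussianReal_abs_lt_lt_one (μ : ℝ) {v : ℝ≥0} (hv : v ≠ 0) (s : ℝ) :
    gaussianReal μ v {x | |x| < s} < 1 := by
  have hA : MeasurableSet {x : ℝ | |x| < s} := measurableSet_lt measurable_abs measurable_const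
  have hcompl : gaussianReal μ v {x | |x| < s}ᶜ ≠ 0 := by
    refine fun h0 => ?_
    have hIci : Set.Ici |s| ⊆ {x : ℝ | |x| < s}ᶜ := fun x hx hxs =>
      (le_abs_self s).not_gt (hxs.trans_le' (hx.trans (le_abs_self x)))
    have := gaussianReal_absolutelyContinuous' μ hv (measure_mono_null hIci h0)
    simp at this
  exact prob_le_one.lt_of_ne fun h1 => hcompl ((prob_compl_eq_zero_iff hA).2 h1)

theorem tendsto_nhds_zero_of_eventually_le_add {ι κ : Type*} {l : Filter ι} [l.NeBot]
    {l' : Filter κ} {u : κ → ℝ≥0∞} {b : ι → ℝ≥0∞} {v : ι → κ → ℝ≥0∞}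
    (hb : Tendsto b l (𝓝 0)) (hv : ∀ T, Tendsto (v T) l' (𝓝 0))
    (h : ∀ T, ∀ᶠ n in l', u n ≤ b T + v T n) : Tendsto u l' (𝓝 0) := by
  rw [ENNReal.tendsto_nhds_zero] at hb ⊢
  intro ε hε
  have hε2 : 0 < ε / 2 := ENNReal.half_pos hε.ne'
  obtain ⟨T, hT⟩ := (hb _ hε2).exists
  filter_upwards [h T, ENNReal.tendsto_nhds_zero.1 (hv T) _ hε2] with n hn hvn
  calc u n ≤ b T + v T n := hn
    _ ≤ ε / 2 + ε / 2 := add_le_add hT hvn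
    _ = ε := ENNReal.add_halves ε

theorem adaptive_scaling_nontrue_component_ge_two_general
    {Ω : Type*} [MeasureSpace Ω]
    (σ : ℝ)
    (Kstar : Finset ℕ) (hKne : Kstar.Nonempty)
    (β : ℕ → ℝ) (hβ : ∀ j, β j ≠ 0 ↔ j ∈ Kstar)
    (c : ℕ → ℕ → Ω → ℝ) (hmeas : ∀ n j, Measurable (c n j))
    (hdist : ∀ n, Kstar.max' hKne < n → ∀ j ∈ Finset.Icc 1 n,
      Measure.map (c n j) ℙ = gaussianReal (Real.sqrt n * β j / σ) 1)
    (hindep : ∀ n, Kstar.max' hKne < n →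
      iIndepFun
        (fun j : (Finset.Icc 1 n : Finset ℕ) => c n (j : ℕ)) ℙ)
    (p : ℕ → Ω → ℕ → ℕ)
    (hp : ∀ n, Kstar.max' hKne < n → ∀ᵐ ω ∂ℙ,
      Set.BijOn (p n ω) (Set.Icc 1 n) (Set.Icc 1 n) ∧
      ∀ l ∈ Set.Icc 1 n, ∀ r ∈ Set.Icc 1 n, l < r →
        |c n (p n ω r) ω| < |c n (p n ω l) ω|)
    (α : ℝ) (k : ℕ)
    (j : ℕ) (hj1 : 1 ≤ j) (hj : j ∉ Kstar)
    (a : ℕ → Ω → ℝ)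
    (ha : ∀ n ω, a n ω =
      if c n j ω = 0 then α else 1 + |c n (p n ω (k + 1)) ω| / |c n j ω|)
    (ε : ℝ) :
    Tendsto (fun n : ℕ => (ℙ {ω | a n ω < 2 - ε}).toReal) atTop (nhds 0) := by
  set m := Kstar.max' hKne
  have hlaw : ∀ n, m < n → ∀ i ∈ Finset.Icc 1 n, i ∉ Kstar →
      Measure.map (c n i) ℙ = gaussianReal 0 1 := by
    intro n hn i hi hiK
    rw [hdist n hn i hi, not_ne_iff.1 (mt (hβ i).1 hiK), mul_zero, zero_div]
  have hnull : ∀ n, m < n → ∀ i ∈ Finset.Ioc m n, Measure.map (c n i) ℙ = gaussianReal 0 1 :=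
    fun n hn i hi => hlaw n hn i (Nat.Ioc_subset_Icc_one m n hi) fun hiK =>
      (Finset.mem_Ioc.1 hi).1.not_ge (Kstar.le_max' i hiK)
  have hθ (T : ℝ) :
      Tendsto (fun n => ℙ {ω | |c n (p n ω (k + 1)) ω| < |2 - ε - 1| * T}) atTop (𝓝 0) :=
    tendsto_measure_abs_apply_succ_lt (fun n _ i _ => hmeas n i) hindep hnull
      (fun n hn => (hp n hn).mono fun _ h => ⟨h.1.surjOn, StrictAntiOn.antitoneOn h.2⟩)
      (gaussianReal_abs_lt_lt_one 0 one_ne_zero _)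
  refine (ENNReal.tendsto_toReal ENNReal.zero_ne_top).comp
    (tendsto_nhds_zero_of_eventually_le_add (tendsto_measure_abs_gt (gaussianReal 0 1)) hθ
      fun T => ?_)
  filter_upwards [eventually_gt_atTop (max m j)] with n hn
  have hjlaw := hlaw n ((le_max_left m j).trans_lt hn) j
    (Finset.mem_Icc.2 ⟨hj1, (le_max_right m j).trans hn.le⟩) hj
  simpa only [ha] using measure_ite_one_add_div_lt_le_of_map (hmeas n j) hjlaw
    (gaussianReal_absolutelyContinuous 0 one_ne_zero (measure_singleton 0))
    (fun ω => |c n (p n ω (k + 1)) ω|) α (2 - ε) T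

/-- The adaptive scaling factor of a non-true component eventually exceeds `2`.  Fix a
threshold index `k > k*` and an index `j ∉ K*` (with `j ≥ 1`).  With `θ̃_k = |c̃_{p_{k+1}}|`
and the adaptive scaling value `α̂_j = 1 + θ̃_k/|c̃_j|` (`= α` if `c̃_j = 0`), one has
`P[α̂_j < 2 − ε] → 0` as `n → ∞`, for every `ε > 0`. -/
theorem adaptive_scaling_nontrue_component_ge_two
    {Ω : Type*} [MeasureSpace Ω] [IsProbabilityMeasure (ℙ : Measure Ω)]
    (σ : ℝ) (hσ : 0 < σ)
    (Kstar : Finset ℕ) (hKne : Kstar.Nonempty) (hKpos : ∀ j ∈ Kstar, 1 ≤ j)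
    (β : ℕ → ℝ) (hβ : ∀ j, β j ≠ 0 ↔ j ∈ Kstar)
    (c : ℕ → ℕ → Ω → ℝ) (hmeas : ∀ n j, Measurable (c n j))
    (hdist : ∀ n, Kstar.max' hKne < n → ∀ j ∈ Finset.Icc 1 n,
      Measure.map (c n j) ℙ = gaussianReal (Real.sqrt n * β j / σ) 1)
    (hindep : ∀ n, Kstar.max' hKne < n →
      iIndepFun
        (fun j : (Finset.Icc 1 n : Finset ℕ) => c n (j : ℕ)) ℙ)
    (p : ℕ → Ω → ℕ → ℕ) (hpmeas : ∀ n l, Measurable fun ω => p n ω l)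
    (hp : ∀ n, Kstar.max' hKne < n → ∀ᵐ ω ∂ℙ,
      Set.BijOn (p n ω) (Set.Icc 1 n) (Set.Icc 1 n) ∧
      ∀ l ∈ Set.Icc 1 n, ∀ r ∈ Set.Icc 1 n, l < r →
        |c n (p n ω r) ω| < |c n (p n ω l) ω|)
    (α : ℝ) (k : ℕ) (hk : Kstar.card < k)
    (j : ℕ) (hj1 : 1 ≤ j) (hj : j ∉ Kstar)
    (a : ℕ → Ω → ℝ)
    (ha : ∀ n ω, a n ω =
      if c n j ω = 0 then α else 1 + |c n (p n ω (k + 1)) ω| / |c n j ω|)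
    (ε : ℝ) (hε : 0 < ε) :
    Tendsto (fun n : ℕ => (ℙ {ω | a n ω < 2 - ε}).toReal) atTop (nhds 0) :=
  adaptive_scaling_nontrue_component_ge_two_general σ Kstar hKne β hβ c hmeas hdist hindep p hp α k
    j hj1 hj a ha ε
end

section
/- Let X₁, X₂, … be i.i.d. χ²₁ random variables, let X_{(1)}(n) = max_{1 ≤ i ≤ n} X_i, and let t_n = 2 log n − log log n − log π. Then for every x ∈ ℝ, lim_{n→∞} P[ (X_{(1)}(n) − t_n)/2 ≤ x ] = exp(−e^{−x}), i.e. the normalized maximum converges in distribution to the standard Gumbel (double exponential) distribution. -/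
/-! By independence, `P[max_{i<n} X_i ≤ c] = F(c)^n` with `F` the χ²₁ distribution function,
and by the symmetry of the normal law `1 - F(c) = 2 P[Z > √c]`. The Mills-ratio bounds
`b φ(b) / (b² + 1) ≤ P[Z > b] ≤ φ(b) / b` give `P[Z > b] ~ φ(b) / b`, and the centring `t n`
is chosen exactly so that `n · 2 φ(√c_n) / √c_n → e^{-x}` at `c_n = t n + 2x`. Hence
`F(c_n)^n = (1 - 2 P[Z > √c_n])^n → exp(-e^{-x})`. -/

set_option autoImplicit false

open MeasureTheory ProbabilityTheory Filter Real

/-- The chi-squared distribution with one degree of freedom: the law of `Z^2`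
for `Z` a standard normal random variable. -/
noncomputable def chiSq1 : Measure ℝ :=
  Measure.map (fun z : ℝ => z ^ 2) (gaussianReal 0 1)

open Asymptotics Set Topology

lemma gaussianPDFReal_zero_one (z : ℝ) :
    gaussianPDFReal 0 1 z = (√(2 * π))⁻¹ * exp (-z ^ 2 / 2) := by
  simp [gaussianPDFReal]

lemma hasDerivAt_gaussianPDFReal_zero_one (z : ℝ) :
    HasDerivAt (gaussianPDFReal 0 1) (-z * gaussianPDFReal 0 1 z) z := by
  rw [funext gaussianPDFReal_zero_one]
  have hexponent : HasDerivAt (fun z : ℝ => -z ^ 2 / 2) (-z) z :=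
    ((hasDerivAt_pow 2 z).neg.div_const 2).congr_deriv (by ring)
  exact (hexponent.exp.const_mul _).congr_deriv (by ring)

lemma tendsto_gaussianPDFReal_zero_one_atTop : Tendsto (gaussianPDFReal 0 1) atTop (𝓝 0) := by
  rw [funext gaussianPDFReal_zero_one, ← mul_zero (√(2 * π))⁻¹]
  refine tendsto_const_nhds.mul (tendsto_exp_comp_nhds_zero.mpr ?_)
  simpa only [neg_div, Function.comp_def] using
    tendsto_neg_atTop_atBot.comp ((tendsto_pow_atTop two_ne_zero).atTop_div_const two_pos)

lemma gaussianReal_real_Ioi (b : ℝ) :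
    (gaussianReal 0 1).real (Ioi b) = ∫ z in Ioi b, gaussianPDFReal 0 1 z := by
  rw [measureReal_def, gaussianReal_apply_eq_integral 0 one_ne_zero,
    ENNReal.toReal_ofReal
      (setIntegral_nonneg measurableSet_Ioi fun z _ => gaussianPDFReal_nonneg 0 1 z)]

lemma gaussianReal_real_Ioi_le {b : ℝ} (hb : 0 < b) :
    (gaussianReal 0 1).real (Ioi b) ≤ gaussianPDFReal 0 1 b / b := by
  set φ := gaussianPDFReal 0 1
  have hderiv : ∀ z ∈ Ici b, HasDerivAt (fun z => -φ z) (z * φ z) z := fun z _ =>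
    (hasDerivAt_gaussianPDFReal_zero_one z).neg.congr_deriv (by ring)
  have hnonneg : ∀ z ∈ Ioi b, 0 ≤ z * φ z := fun z hz =>
    mul_nonneg (hb.trans hz).le (gaussianPDFReal_nonneg 0 1 z)
  have hlim : Tendsto (fun z => -φ z) atTop (𝓝 (-0)) :=
    tendsto_gaussianPDFReal_zero_one_atTop.neg
  rw [gaussianReal_real_Ioi]
  calc ∫ z in Ioi b, φ z ≤ ∫ z in Ioi b, b⁻¹ * (z * φ z) := by
        refine setIntegral_mono_on (integrable_gaussianPDFReal 0 1).integrableOn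
          ((integrableOn_Ioi_deriv_of_nonneg' hderiv hnonneg hlim).const_mul _) measurableSet_Ioi
          fun z hz => ?_
        rw [← mul_assoc]
        refine le_mul_of_one_le_left (gaussianPDFReal_nonneg 0 1 z) ?_
        rw [inv_mul_eq_div, one_le_div hb]
        exact hz.le
    _ = φ b / b := by
        rw [integral_const_mul, integral_Ioi_of_hasDerivAt_of_nonneg' hderiv hnonneg hlim]
        ring

lemma le_gaussianReal_real_Ioi {b : ℝ} (hb : 0 < b) :
    b / (b ^ 2 + 1) * gaussianPDFReal 0 1 b ≤ (gaussianReal 0 1).real (Ioi b) := by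
  set φ := gaussianPDFReal 0 1
  have hderiv : ∀ z ∈ Ici b, HasDerivAt (fun z => -(φ z / z)) ((1 + (z ^ 2)⁻¹) * φ z) z :=
    fun z hz => by
      have hz0 : z ≠ 0 := (hb.trans_le hz).ne'
      exact ((hasDerivAt_gaussianPDFReal_zero_one z).div (hasDerivAt_id z) hz0).neg.congr_deriv
        (by simp only [id, φ]; field_simp; ring)
  have hnonneg : ∀ z ∈ Ioi b, 0 ≤ (1 + (z ^ 2)⁻¹) * φ z := fun z _ =>
    mul_nonneg (by positivity) (gaussianPDFReal_nonneg 0 1 z)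
  have hlim : Tendsto (fun z => -(φ z / z)) atTop (𝓝 (-(0 * 0))) :=
    (tendsto_gaussianPDFReal_zero_one_atTop.mul tendsto_inv_atTop_zero).neg
  have key : φ b / b ≤ (1 + (b ^ 2)⁻¹) * ∫ z in Ioi b, φ z := by
    calc φ b / b = ∫ z in Ioi b, (1 + (z ^ 2)⁻¹) * φ z := by
          rw [integral_Ioi_of_hasDerivAt_of_nonneg' hderiv hnonneg hlim]; ring
      _ ≤ ∫ z in Ioi b, (1 + (b ^ 2)⁻¹) * φ z := by
          refine setIntegral_mono_on (integrableOn_Ioi_deriv_of_nonneg' hderiv hnonneg hlim)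
            ((integrable_gaussianPDFReal 0 1).integrableOn.const_mul _) measurableSet_Ioi
            fun z hz => ?_
          gcongr
          exacts [gaussianPDFReal_nonneg 0 1 z, hz.le]
      _ = _ := integral_const_mul _ _
  rw [gaussianReal_real_Ioi]
  have hfac : b / (b ^ 2 + 1) * (1 + (b ^ 2)⁻¹) = b⁻¹ := by field_simp
  calc b / (b ^ 2 + 1) * φ b = b / (b ^ 2 + 1) * (φ b / b) * b := by field_simp
    _ ≤ b / (b ^ 2 + 1) * ((1 + (b ^ 2)⁻¹) * ∫ z in Ioi b, φ z) * b := by gcongr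
    _ = ∫ z in Ioi b, φ z := by rw [← mul_assoc, hfac]; field_simp

lemma isEquivalent_gaussianReal_real_Ioi :
    (fun b => (gaussianReal 0 1).real (Ioi b)) ~[atTop] fun b => gaussianPDFReal 0 1 b / b := by
  refine isEquivalent_of_tendsto_one ?_
  have hlower : Tendsto (fun b : ℝ => 1 - (b ^ 2 + 1)⁻¹) atTop (𝓝 (1 - 0)) :=
    tendsto_const_nhds.sub (tendsto_inv_atTop_zero.comp
      (tendsto_atTop_add_const_right _ 1 (tendsto_pow_atTop two_ne_zero)))
  rw [sub_zero] at hlower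
  refine tendsto_of_tendsto_of_tendsto_of_le_of_le' hlower tendsto_const_nhds ?_ ?_
  all_goals
    filter_upwards [eventually_gt_atTop 0] with b hb
    have hφ : 0 < gaussianPDFReal 0 1 b / b :=
      div_pos (gaussianPDFReal_pos 0 1 b one_ne_zero) hb
    simp only [Pi.div_apply]
  · rw [le_div_iff₀ hφ]
    refine (le_gaussianReal_real_Ioi hb).trans_eq' ?_
    field_simp
    ring
  · rw [div_le_one hφ]
    exact gaussianReal_real_Ioi_le hb

lemma gaussianReal_real_Iio_neg (b : ℝ) :
    (gaussianReal 0 1).real (Iio (-b)) = (gaussianReal 0 1).real (Ioi b) := by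
  have hpre : (fun z : ℝ => -z) ⁻¹' Ioi b = Iio (-b) := by ext z; simp
  rw [← hpre, ← map_measureReal_apply measurable_neg measurableSet_Ioi, gaussianReal_map_neg,
    neg_zero]

lemma chiSq1_real_Iic {y : ℝ} (hy : 0 ≤ y) :
    chiSq1.real (Iic y) = 1 - 2 * (gaussianReal 0 1).real (Ioi √y) := by
  have hpre : (fun z : ℝ => z ^ 2) ⁻¹' Iic y = (Iio (-√y) ∪ Ioi √y)ᶜ := by
    ext z; simp [Real.sq_le hy]
  have hdisj : Disjoint (Iio (-√y)) (Ioi √y) :=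
    (Iic_disjoint_Ioi (neg_le_self (sqrt_nonneg y))).mono_left Iio_subset_Iic_self
  rw [chiSq1, map_measureReal_apply (by fun_prop) measurableSet_Iic, hpre,
    measureReal_compl (measurableSet_Iio.union measurableSet_Ioi),
    measureReal_union hdisj measurableSet_Ioi, gaussianReal_real_Iio_neg, probReal_univ]
  ring

lemma measure_iSup_le_eq_pow {Ω : Type*} [MeasurableSpace Ω] {P : Measure Ω}
    {X : ℕ → Ω → ℝ} {μ : Measure ℝ} (hmeas : ∀ i, Measurable (X i)) (hindep : iIndepFun X P)
    (hlaw : ∀ i, P.map (X i) = μ) {n : ℕ} (hn : n ≠ 0) (c : ℝ) :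
    P {ω | ⨆ i : Fin n, X i ω ≤ c} = μ (Iic c) ^ n := by
  have : Nonempty (Fin n) := ⟨⟨0, Nat.pos_of_ne_zero hn⟩⟩
  have hset : {ω | ⨆ i : Fin n, X i ω ≤ c} = ⋂ i ∈ Finset.range n, X i ⁻¹' Iic c := by
    ext ω
    simp [ciSup_le_iff (Set.finite_range _).bddAbove, Fin.forall_iff]
  rw [hset, hindep.measure_inter_preimage_eq_mul _ fun i _ => measurableSet_Iic]
  have hone (i : ℕ) : P (X i ⁻¹' Iic c) = μ (Iic c) := by
    rw [← hlaw i, Measure.map_apply (hmeas i) measurableSet_Iic]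
  simp only [hone, Finset.prod_const, Finset.card_range]

/-- `t n + 2 x` in the notation of the theorem. -/
noncomputable def gumbelLevel (x : ℝ) (n : ℕ) : ℝ := 2 * log n - log (log n) - log π + 2 * x

lemma isEquivalent_gumbelLevel (x : ℝ) : gumbelLevel x ~[atTop] fun n => 2 * log n := by
  have hlog : Tendsto (fun n : ℕ => log n) atTop atTop :=
    tendsto_log_atTop.comp tendsto_natCast_atTop_atTop
  have hconst (c : ℝ) : (fun _ : ℕ => c) =o[atTop] fun n : ℕ => log n :=
    isLittleO_const_log_atTop.comp_tendsto tendsto_natCast_atTop_atTop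
  have hsmall : (fun n : ℕ => -log (log n) - log π + 2 * x) =o[atTop] fun n : ℕ => 2 * log n :=
    (((isLittleO_log_id_atTop.comp_tendsto hlog).neg_left.sub (hconst _)).add
      (hconst _)).const_mul_right' (by norm_num : IsUnit (2 : ℝ))
  have hsplit : gumbelLevel x =
      (fun n : ℕ => 2 * log n) + fun n : ℕ => -log (log n) - log π + 2 * x := by
    ext n
    simp only [gumbelLevel, Pi.add_apply]
    ring
  rw [hsplit]
  exact IsEquivalent.refl.add_isLittleO hsmall

lemma tendsto_gumbelLevel_atTop (x : ℝ) : Tendsto (gumbelLevel x) atTop atTop :=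
  (isEquivalent_gumbelLevel x).symm.tendsto_atTop
    ((tendsto_log_atTop.comp tendsto_natCast_atTop_atTop).const_mul_atTop two_pos)

lemma natCast_mul_exp_neg_gumbelLevel_div_two (x : ℝ) {n : ℕ} (hn : 1 < n) :
    n * exp (-gumbelLevel x n / 2) = √(π * log n) * exp (-x) := by
  have hlog : 0 < log n := log_pos (by exact_mod_cast hn)
  have hexp_half (u : ℝ) (hu : 0 < u) : exp (log u / 2) = √u := by
    rw [← log_sqrt hu.le, exp_log (sqrt_pos.mpr hu)]
  have hexponent : -gumbelLevel x n / 2 = -log n + log (π * log n) / 2 - x := by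
    rw [gumbelLevel, log_mul pi_ne_zero hlog.ne']
    ring
  rw [hexponent, sub_eq_add_neg, exp_add, exp_add, exp_neg (log n), exp_log (by positivity),
    hexp_half _ (by positivity)]
  field_simp

lemma natCast_mul_two_mul_gaussianPDFReal_sqrt_gumbelLevel (x : ℝ) {n : ℕ} (hn : 1 < n)
    (hlevel : 0 < gumbelLevel x n) :
    n * (2 * (gaussianPDFReal 0 1 √(gumbelLevel x n) / √(gumbelLevel x n))) =
      exp (-x) * √(2 * log n / gumbelLevel x n) := by
  have hlog : 0 < log n := log_pos (by exact_mod_cast hn)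
  have hsqrt : √(2 * π) * √(2 * log n) = 2 * √(π * log n) := by
    rw [← sqrt_mul (by positivity), show 2 * π * (2 * log n) = 2 ^ 2 * (π * log n) by ring,
      sqrt_mul (by positivity), sqrt_sq zero_le_two]
  calc n * (2 * (gaussianPDFReal 0 1 √(gumbelLevel x n) / √(gumbelLevel x n)))
        = 2 * (√(2 * π))⁻¹ * (√(π * log n) * exp (-x)) / √(gumbelLevel x n) := by
        rw [← natCast_mul_exp_neg_gumbelLevel_div_two x hn, gaussianPDFReal_zero_one,
          sq_sqrt hlevel.le]
        ring
    _ = exp (-x) * (√(2 * π) * √(2 * log n)) / (√(2 * π) * √(gumbelLevel x n)) := by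
        rw [hsqrt]
        field_simp
    _ = exp (-x) * √(2 * log n / gumbelLevel x n) := by
        rw [sqrt_div' _ hlevel.le]
        field_simp

lemma tendsto_natCast_mul_two_mul_gaussianReal_real_Ioi_sqrt_gumbelLevel (x : ℝ) :
    Tendsto (fun n : ℕ => n * (2 * (gaussianReal 0 1).real (Ioi √(gumbelLevel x n)))) atTop
      (𝓝 (exp (-x))) := by
  have hlevel := tendsto_gumbelLevel_atTop x
  have hequiv :
      (fun n : ℕ => n * (2 * (gaussianReal 0 1).real (Ioi √(gumbelLevel x n)))) ~[atTop]
        fun n : ℕ =>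
          n * (2 * (gaussianPDFReal 0 1 √(gumbelLevel x n) / √(gumbelLevel x n))) :=
    IsEquivalent.refl.mul (IsEquivalent.refl.mul
      (isEquivalent_gaussianReal_real_Ioi.comp_tendsto (tendsto_sqrt_atTop.comp hlevel)))
  have hratio : Tendsto (fun n : ℕ => 2 * log n / gumbelLevel x n) atTop (𝓝 1) :=
    (isEquivalent_iff_tendsto_one (hlevel.eventually_ne_atTop 0)).mp
      (isEquivalent_gumbelLevel x).symm
  have hlim : Tendsto (fun n : ℕ => exp (-x) * √(2 * log n / gumbelLevel x n)) atTop
      (𝓝 (exp (-x))) := by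
    simpa using tendsto_const_nhds.mul ((continuous_sqrt.tendsto 1).comp hratio)
  refine hequiv.symm.tendsto_nhds (hlim.congr' ?_)
  filter_upwards [eventually_gt_atTop 1, hlevel.eventually_gt_atTop 0] with n hn hpos
  exact (natCast_mul_two_mul_gaussianPDFReal_sqrt_gumbelLevel x hn hpos).symm

theorem max_chiSq_gumbel_limit_general
    {Ω : Type*} [MeasureSpace Ω]
    (X : ℕ → Ω → ℝ) (hXmeas : ∀ i, Measurable (X i))
    (hXindep : iIndepFun X ℙ)
    (hXdist : ∀ i, Measure.map (X i) ℙ = chiSq1)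
    (t : ℕ → ℝ) (ht : ∀ n, t n = 2 * Real.log n - Real.log (Real.log n) - Real.log π)
    (x : ℝ) :
    Tendsto
      (fun n : ℕ =>
        (ℙ {ω | ((⨆ i : Fin n, X i ω) - t n) / 2 ≤ x}).toReal)
      atTop (nhds (Real.exp (-Real.exp (-x)))) := by
  have hevent (n : ℕ) : {ω | ((⨆ i : Fin n, X i ω) - t n) / 2 ≤ x} =
      {ω | ⨆ i : Fin n, X i ω ≤ gumbelLevel x n} := by
    ext ω
    simp only [mem_ofPred_eq, gumbelLevel, ← ht]
    constructor <;> intro h <;> linarith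
  have hlim := (tendsto_natCast_mul_two_mul_gaussianReal_real_Ioi_sqrt_gumbelLevel x).neg
  simp only [← mul_neg] at hlim
  refine (tendsto_one_add_pow_exp_of_tendsto hlim).congr' ?_
  filter_upwards [eventually_ne_atTop 0, (tendsto_gumbelLevel_atTop x).eventually_ge_atTop 0]
    with n hn hlevel
  rw [hevent, measure_iSup_le_eq_pow hXmeas hXindep hXdist hn, ENNReal.toReal_pow,
    ← measureReal_def, chiSq1_real_Iic hlevel]
  ring

/-- Gumbel limit for the maximum of i.i.d. chi-squared(1) random variables:
with `t n = 2 log n - log log n - log π`, the normalized maximum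
`(X_{(1)}(n) - t n)/2` converges in distribution to the standard Gumbel law. -/
theorem max_chiSq_gumbel_limit
    {Ω : Type*} [MeasureSpace Ω] [IsProbabilityMeasure (ℙ : Measure Ω)]
    (X : ℕ → Ω → ℝ) (hXmeas : ∀ i, Measurable (X i))
    (hXindep : iIndepFun X ℙ)
    (hXdist : ∀ i, Measure.map (X i) ℙ = chiSq1)
    (t : ℕ → ℝ) (ht : ∀ n, t n = 2 * Real.log n - Real.log (Real.log n) - Real.log π)
    (x : ℝ) :
    Tendsto
      (fun n : ℕ =>
        (ℙ {ω | ((⨆ i : Fin n, X i ω) - t n) / 2 ≤ x}).toReal)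
      atTop (nhds (Real.exp (-Real.exp (-x)))) :=
  max_chiSq_gumbel_limit_general X hXmeas hXindep hXdist t ht x
end

section
/- Let X₁, X₂, … be i.i.d. χ²₁ random variables, let X_{(1)}(n) = max_{1 ≤ i ≤ n} X_i, and let t_n = 2 log n − log log n − log π. Then for each fixed positive integer k, lim_{n→∞} E[ X_{(1)}(n)^k ] / t_n^k = 1. -/
set_option autoImplicit false

open MeasureTheory ProbabilityTheory Filter Real

/-!
Write `M_n` for the maximum. For `a ≥ 0` one has `M_n^k ≤ a^k + ∑ᵢ X_i^k 1{X_i > a}`, and a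
Chernoff bound gives `E[X^k; X > a] ≤ C_θ e^{-θ a}` for every `θ < 1/2`. Taking `a = (1 + δ) t_n`
and `θ (1 + δ) > 1/2`, the sum contributes `o(t_n^k)` since `n e^{-s t_n} → 0` for `s > 1/2`.
Conversely, Markov's inequality and independence give `E[M_n^k] ≥ b^k (1 - e^{-n p})` with
`p = P(X > b)`; for `b = (1 - δ) t_n` the Gaussian density yields `p ≥ c e^{-(1 + δ) b / 2}`, so
`n p → ∞` since `n e^{-s t_n} → ∞` for `s < 1/2`. Hence `(1 - δ)^k ≲ E[M_n^k] / t_n^k ≲ (1 + δ)^k`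
for every small `δ > 0`.
-/

open Asymptotics Topology

lemma isEquivalent_mul_add_mul_log_add {c : ℝ} (hc : c ≠ 0) (d e : ℝ) :
    (fun x => c * x + d * log x + e) ~[atTop] fun x => c * x := by
  have hlog : (fun x => d * log x + e) =o[atTop] fun x => c * x :=
    ((isLittleO_log_id_atTop.const_mul_left d).add (isLittleO_const_id_atTop e)).const_mul_right hc
  refine (IsEquivalent.refl.add_isLittleO hlog).congr_left (Eventually.of_forall fun x => ?_)
  simp only [Pi.add_apply]
  ring

noncomputable def chiSq1MaxScale (n : ℕ) : ℝ := 2 * log n - log (log n) - log π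

lemma tendsto_log_natCast_atTop : Tendsto (fun n : ℕ => log n) atTop atTop :=
  tendsto_log_atTop.comp tendsto_natCast_atTop_atTop

lemma tendsto_chiSq1MaxScale_atTop : Tendsto chiSq1MaxScale atTop atTop := by
  have h := (isEquivalent_mul_add_mul_log_add two_ne_zero (-1) (-log π)).symm.tendsto_atTop
    (tendsto_id.const_mul_atTop two_pos)
  convert h.comp tendsto_log_natCast_atTop using 1
  ext n
  simp only [chiSq1MaxScale, Function.comp_apply]
  ring

lemma log_natCast_sub_mul_chiSq1MaxScale (s : ℝ) (n : ℕ) :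
    log n - s * chiSq1MaxScale n = (1 - 2 * s) * log n + s * log (log n) + s * log π := by
  simp only [chiSq1MaxScale]
  ring

lemma natCast_mul_exp_neg_mul_chiSq1MaxScale {n : ℕ} (hn : n ≠ 0) (s : ℝ) :
    n * exp (-(s * chiSq1MaxScale n)) =
      exp ((1 - 2 * s) * log n + s * log (log n) + s * log π) := by
  rw [← log_natCast_sub_mul_chiSq1MaxScale, sub_eq_add_neg, exp_add,
    exp_log (Nat.cast_pos.2 (Nat.pos_of_ne_zero hn))]

lemma tendsto_natCast_mul_exp_neg_mul_chiSq1MaxScale_zero {s : ℝ} (hs : 1 / 2 < s) :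
    Tendsto (fun n : ℕ => n * exp (-(s * chiSq1MaxScale n))) atTop (𝓝 0) := by
  have hc : 1 - 2 * s < 0 := by linarith
  have h := (isEquivalent_mul_add_mul_log_add hc.ne s (s * log π)).symm.tendsto_atBot
    (tendsto_id.const_mul_atTop_of_neg hc)
  refine (tendsto_exp_atBot.comp (h.comp tendsto_log_natCast_atTop)).congr' ?_
  filter_upwards [eventually_ne_atTop 0] with n hn
  exact (natCast_mul_exp_neg_mul_chiSq1MaxScale hn s).symm

lemma tendsto_natCast_mul_exp_neg_mul_chiSq1MaxScale_atTop {s : ℝ} (hs : s < 1 / 2) :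
    Tendsto (fun n : ℕ => n * exp (-(s * chiSq1MaxScale n))) atTop atTop := by
  have hc : 0 < 1 - 2 * s := by linarith
  have h := (isEquivalent_mul_add_mul_log_add hc.ne' s (s * log π)).symm.tendsto_atTop
    (tendsto_id.const_mul_atTop hc)
  refine (tendsto_exp_atTop.comp (h.comp tendsto_log_natCast_atTop)).congr' ?_
  filter_upwards [eventually_ne_atTop 0] with n hn
  exact (natCast_mul_exp_neg_mul_chiSq1MaxScale hn s).symm

lemma tendsto_of_forall_exists_bounds {α β : Type*} {l : Filter α} {F : Filter β} [F.NeBot]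
    {r : α → ℝ} {x : ℝ} {L U : β → ℝ} (hL : Tendsto L F (𝓝 x)) (hU : Tendsto U F (𝓝 x))
    (hlow : ∀ᶠ δ in F, ∃ g : α → ℝ, Tendsto g l (𝓝 (L δ)) ∧ g ≤ᶠ[l] r)
    (hup : ∀ᶠ δ in F, ∃ g : α → ℝ, Tendsto g l (𝓝 (U δ)) ∧ r ≤ᶠ[l] g) :
    Tendsto r l (𝓝 x) := by
  refine tendsto_order.2 ⟨fun c hc => ?_, fun c hc => ?_⟩
  · obtain ⟨δ, hcδ, g, hg, hgr⟩ := ((hL.eventually (lt_mem_nhds hc)).and hlow).exists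
    filter_upwards [hg.eventually (lt_mem_nhds hcδ), hgr] with a h1 h2 using h1.trans_le h2
  · obtain ⟨δ, hcδ, g, hg, hrg⟩ := ((hU.eventually (gt_mem_nhds hc)).and hup).exists
    filter_upwards [hg.eventually (gt_mem_nhds hcδ), hrg] with a h1 h2 using h2.trans_lt h1

instance : IsProbabilityMeasure chiSq1 :=
  Measure.isProbabilityMeasure_map (by fun_prop)

lemma ae_nonneg_chiSq1 : ∀ᵐ x ∂chiSq1, 0 ≤ x :=
  (ae_map_iff (by fun_prop) measurableSet_Ici).2 (ae_of_all _ fun z => sq_nonneg z)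

lemma integrable_exp_mul_sq_gaussianReal {s : ℝ} (hs : s < 1 / 2) :
    Integrable (fun z => exp (s * z ^ 2)) (gaussianReal 0 1) := by
  rw [gaussianReal_of_var_ne_zero 0 one_ne_zero,
    integrable_withDensity_iff_integrable_smul' (measurable_gaussianPDF 0 1)
      (ae_of_all _ fun _ => gaussianPDF_lt_top)]
  refine ((integrable_exp_neg_mul_sq (b := 1 / 2 - s) (by linarith)).const_mul
    (√(2 * π))⁻¹).congr (ae_of_all _ fun z => ?_)
  simp only [toReal_gaussianPDF, gaussianPDFReal, smul_eq_mul, NNReal.coe_one, mul_one, sub_zero]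
  rw [mul_assoc, ← exp_add]
  ring_nf

lemma integrable_exp_mul_chiSq1 {s : ℝ} (hs : s < 1 / 2) :
    Integrable (fun x => exp (s * x)) chiSq1 :=
  (integrable_map_measure (by fun_prop) (by fun_prop)).2 (integrable_exp_mul_sq_gaussianReal hs)

lemma integrable_pow_mul_exp_mul_chiSq1 (k : ℕ) {θ : ℝ} (hθ : θ < 1 / 2) :
    Integrable (fun x => x ^ k * exp (θ * x)) chiSq1 := by
  have ht : (1 / 2 - θ) / 2 ≠ 0 := by linarith
  exact integrable_pow_mul_exp_of_integrable_exp_mul ht (integrable_exp_mul_chiSq1 (by linarith))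
    (integrable_exp_mul_chiSq1 (by linarith)) k

lemma integrable_pow_chiSq1 (k : ℕ) : Integrable (fun x => x ^ k) chiSq1 := by
  simpa using integrable_pow_mul_exp_mul_chiSq1 k (θ := 0) (by norm_num)

lemma gaussianReal_real_Ioc_ge {x : ℝ} (hx : 0 ≤ x) :
    (√(2 * π))⁻¹ * exp (-(x + 1) ^ 2 / 2) ≤ (gaussianReal 0 1).real (Set.Ioc x (x + 1)) := by
  rw [measureReal_def, gaussianReal_apply_eq_integral 0 one_ne_zero,
    ENNReal.toReal_ofReal (setIntegral_nonneg measurableSet_Ioc fun _ _ =>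
      gaussianPDFReal_nonneg 0 1 _)]
  have h := setIntegral_ge_of_const_le_real (s := Set.Ioc x (x + 1))
    (c := (√(2 * π))⁻¹ * exp (-(x + 1) ^ 2 / 2)) measurableSet_Ioc (by simp) ?_
    (integrable_gaussianPDFReal 0 1).integrableOn
  · simpa using h
  · rintro z ⟨hxz, hzx⟩
    simp only [gaussianPDFReal, NNReal.coe_one, mul_one, sub_zero]
    gcongr
    nlinarith

/-- `{z² > b}` contains `(√b, √b + 1]`, and `(√b + 1)² ≤ (1 + ε) b + 1 + 1 / ε` by AM-GM. -/
lemma chiSq1_real_Ioi_ge {ε : ℝ} (hε : 0 < ε) {b : ℝ} (hb : 0 ≤ b) :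
    (√(2 * π))⁻¹ * exp (-(1 + 1 / ε) / 2) * exp (-((1 + ε) / 2 * b)) ≤ chiSq1.real (Set.Ioi b) := by
  have hsub : Set.Ioc (√b) (√b + 1) ⊆ (fun z : ℝ => z ^ 2) ⁻¹' Set.Ioi b := by
    rintro z ⟨hz, -⟩
    simpa using (Real.sqrt_lt' (by linarith [Real.sqrt_nonneg b])).1 hz
  have hsq : (√b + 1) ^ 2 ≤ (1 + ε) * b + (1 + 1 / ε) := by
    have := Real.sq_sqrt hb
    have h1 : 2 * √b ≤ ε * b + 1 / ε := by
      rw [← sub_nonneg]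
      have : ε * b + 1 / ε - 2 * √b = (ε * √b - 1) ^ 2 / ε := by field_simp; nlinarith
      rw [this]; positivity
    nlinarith
  calc (√(2 * π))⁻¹ * exp (-(1 + 1 / ε) / 2) * exp (-((1 + ε) / 2 * b))
      ≤ (√(2 * π))⁻¹ * exp (-(√b + 1) ^ 2 / 2) := by
        rw [mul_assoc, ← exp_add]
        gcongr
        linarith
    _ ≤ (gaussianReal 0 1).real (Set.Ioc (√b) (√b + 1)) :=
        gaussianReal_real_Ioc_ge (Real.sqrt_nonneg b)
    _ ≤ chiSq1.real (Set.Ioi b) := by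
        rw [chiSq1, map_measureReal_apply (by fun_prop) measurableSet_Ioi]
        exact measureReal_mono hsub

lemma pow_iSup_le_add_sum_indicator {ι : Type*} [Fintype ι] {f : ι → ℝ} (hf : ∀ i, 0 ≤ f i)
    {a : ℝ} (ha : 0 ≤ a) (k : ℕ) :
    (⨆ i, f i) ^ k ≤ a ^ k + ∑ i, (Set.Ioi a).indicator (· ^ k) (f i) := by
  have hsum : 0 ≤ ∑ i, (Set.Ioi a).indicator (· ^ k) (f i) :=
    Finset.sum_nonneg fun i _ => Set.indicator_nonneg (fun _ _ => pow_nonneg (hf i) k) _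
  rcases isEmpty_or_nonempty ι with hι | hι
  · rw [Real.iSup_of_isEmpty]
    linarith [pow_le_pow_left₀ le_rfl ha k]
  obtain ⟨j, hj⟩ := exists_eq_ciSup_of_finite (f := f)
  rw [← hj]
  by_cases hja : f j ≤ a
  · linarith [pow_le_pow_left₀ (hf j) hja k]
  calc f j ^ k = (Set.Ioi a).indicator (· ^ k) (f j) :=
        (Set.indicator_of_mem (Set.mem_Ioi.2 (not_le.1 hja)) _).symm
    _ ≤ ∑ i, (Set.Ioi a).indicator (· ^ k) (f i) :=
        Finset.single_le_sum (fun i _ => Set.indicator_nonneg (fun x _ => pow_nonneg (hf i) k) _)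
          (Finset.mem_univ j)
    _ ≤ a ^ k + ∑ i, (Set.Ioi a).indicator (· ^ k) (f i) := le_add_of_nonneg_left (pow_nonneg ha k)

lemma setIntegral_Ioi_pow_le_exp_mul {μ : Measure ℝ} (hμ : ∀ᵐ x ∂μ, 0 ≤ x) {k : ℕ} {θ : ℝ}
    (hθ : 0 ≤ θ) (hint : Integrable (fun x => x ^ k * exp (θ * x)) μ) (a : ℝ) :
    ∫ x in Set.Ioi a, x ^ k ∂μ ≤ exp (-(θ * a)) * ∫ x, x ^ k * exp (θ * x) ∂μ := by
  have hint' := hint.const_mul (exp (-(θ * a)))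
  calc ∫ x in Set.Ioi a, x ^ k ∂μ
      ≤ ∫ x in Set.Ioi a, exp (-(θ * a)) * (x ^ k * exp (θ * x)) ∂μ := by
        refine integral_mono_of_nonneg ?_ hint'.integrableOn ?_
        · filter_upwards [ae_restrict_of_ae hμ] with x hx using pow_nonneg hx k
        filter_upwards [ae_restrict_mem measurableSet_Ioi, ae_restrict_of_ae hμ] with x hxa hx
        have : 1 ≤ exp (θ * (x - a)) := one_le_exp (mul_nonneg hθ (sub_nonneg.2 (le_of_lt hxa)))
        calc x ^ k = x ^ k * 1 := (mul_one _).symm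
          _ ≤ x ^ k * exp (θ * (x - a)) := by gcongr
          _ = exp (-(θ * a)) * (x ^ k * exp (θ * x)) := by
            rw [mul_left_comm, ← exp_add]; ring_nf
    _ ≤ ∫ x, exp (-(θ * a)) * (x ^ k * exp (θ * x)) ∂μ :=
        setIntegral_le_integral hint' (hμ.mono fun x hx => by positivity)
    _ = exp (-(θ * a)) * ∫ x, x ^ k * exp (θ * x) ∂μ := integral_const_mul _ _

section MaxOfIdenticallyDistributed

variable {Ω ι : Type*} [MeasurableSpace Ω] {P : Measure Ω} {X : ι → Ω → ℝ}
  {μ : Measure ℝ}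

lemma ae_forall_nonneg_of_map_eq [Countable ι] (hX : ∀ i, AEMeasurable (X i) P)
    (hμ : ∀ i, P.map (X i) = μ) (hμ0 : ∀ᵐ x ∂μ, 0 ≤ x) : ∀ᵐ ω ∂P, ∀ i, 0 ≤ X i ω :=
  ae_all_iff.2 fun i => ae_of_ae_map (hX i) ((hμ i).symm ▸ hμ0)

lemma integrable_indicator_pow_comp_of_map_eq (hX : ∀ i, AEMeasurable (X i) P)
    (hμ : ∀ i, P.map (X i) = μ) {k : ℕ} (hint : Integrable (fun x => x ^ k) μ) (a : ℝ) (i : ι) :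
    Integrable (fun ω => (Set.Ioi a).indicator (· ^ k) (X i ω)) P := by
  have h := hint.indicator (s := Set.Ioi a) measurableSet_Ioi
  rw [← hμ i] at h
  exact h.comp_aemeasurable (hX i)

lemma integrable_pow_iSup [Fintype ι] [IsFiniteMeasure P] (hX : ∀ i, AEMeasurable (X i) P)
    (hμ : ∀ i, P.map (X i) = μ) (hμ0 : ∀ᵐ x ∂μ, 0 ≤ x) {k : ℕ}
    (hint : Integrable (fun x => x ^ k) μ) :
    Integrable (fun ω => (⨆ i, X i ω) ^ k) P := by
  have hbound : Integrable (fun ω => (0 : ℝ) ^ k + ∑ i, (Set.Ioi 0).indicator (· ^ k) (X i ω)) P :=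
    (integrable_const _).add (integrable_finsetSum _ fun i _ =>
      integrable_indicator_pow_comp_of_map_eq hX hμ hint 0 i)
  refine hbound.mono' ((AEMeasurable.iSup hX).pow_const k).aestronglyMeasurable ?_
  filter_upwards [ae_forall_nonneg_of_map_eq hX hμ hμ0] with ω hω
  rw [Real.norm_of_nonneg (pow_nonneg (Real.iSup_nonneg hω) k)]
  exact pow_iSup_le_add_sum_indicator hω le_rfl k

lemma integral_pow_iSup_le [Fintype ι] [IsProbabilityMeasure P] (hX : ∀ i, AEMeasurable (X i) P)
    (hμ : ∀ i, P.map (X i) = μ) (hμ0 : ∀ᵐ x ∂μ, 0 ≤ x) {k : ℕ}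
    (hint : Integrable (fun x => x ^ k) μ) {a : ℝ} (ha : 0 ≤ a) :
    ∫ ω, (⨆ i, X i ω) ^ k ∂P ≤ a ^ k + Fintype.card ι * ∫ x in Set.Ioi a, x ^ k ∂μ := by
  have hind := integrable_indicator_pow_comp_of_map_eq hX hμ hint a
  have hX0 := ae_forall_nonneg_of_map_eq hX hμ hμ0
  have hterm : ∀ i, ∫ ω, (Set.Ioi a).indicator (· ^ k) (X i ω) ∂P =
      ∫ x in Set.Ioi a, x ^ k ∂μ := fun i => by
    rw [← integral_indicator measurableSet_Ioi, ← hμ i, integral_map (hX i)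
      ((continuous_pow k).measurable.indicator measurableSet_Ioi).aestronglyMeasurable]
  calc ∫ ω, (⨆ i, X i ω) ^ k ∂P
      ≤ ∫ ω, (a ^ k + ∑ i, (Set.Ioi a).indicator (· ^ k) (X i ω)) ∂P := by
        refine integral_mono_of_nonneg ?_
          ((integrable_const _).add (integrable_finsetSum _ fun i _ => hind i)) ?_
        · filter_upwards [hX0] with ω hω using pow_nonneg (Real.iSup_nonneg hω) k
        · filter_upwards [hX0] with ω hω using pow_iSup_le_add_sum_indicator hω ha k
    _ = a ^ k + Fintype.card ι * ∫ x in Set.Ioi a, x ^ k ∂μ := by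
        rw [integral_add (integrable_const _) (integrable_finsetSum _ fun i _ => hind i),
          integral_const, integral_finsetSum _ fun i _ => hind i]
        simp [hterm]

lemma measureReal_iSup_le_le_pow [Fintype ι] [IsProbabilityMeasure P] [IsProbabilityMeasure μ]
    (hX : ∀ i, AEMeasurable (X i) P) (hμ : ∀ i, P.map (X i) = μ) (hindep : iIndepFun X P)
    (b : ℝ) : P.real {ω | ⨆ i, X i ω ≤ b} ≤ (1 - μ.real (Set.Ioi b)) ^ Fintype.card ι := by
  have hsub : {ω | ⨆ i, X i ω ≤ b} ⊆ ⋂ i, X i ⁻¹' Set.Iic b := fun ω hω =>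
    Set.mem_iInter.2 fun i =>
      (le_ciSup (f := fun i => X i ω) (Set.finite_range _).bddAbove i).trans hω
  have hfactor : ∀ i, P.real (X i ⁻¹' Set.Iic b) = 1 - μ.real (Set.Ioi b) := fun i => by
    rw [← map_measureReal_apply_of_aemeasurable (hX i) measurableSet_Iic, hμ i, ← Set.compl_Ioi,
      probReal_compl_eq_one_sub measurableSet_Ioi]
  calc P.real {ω | ⨆ i, X i ω ≤ b} ≤ P.real (⋂ i, X i ⁻¹' Set.Iic b) := measureReal_mono hsub
    _ = ∏ i, P.real (X i ⁻¹' Set.Iic b) := by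
        rw [measureReal_def, hindep.meas_iInter fun i => ⟨Set.Iic b, measurableSet_Iic, rfl⟩,
          ENNReal.toReal_prod]
        rfl
    _ = (1 - μ.real (Set.Ioi b)) ^ Fintype.card ι := by
        simp [hfactor]

lemma one_sub_exp_le_measureReal_lt_iSup [Fintype ι] [IsProbabilityMeasure P]
    [IsProbabilityMeasure μ] (hX : ∀ i, AEMeasurable (X i) P) (hμ : ∀ i, P.map (X i) = μ)
    (hindep : iIndepFun X P) (b : ℝ) :
    1 - exp (-(Fintype.card ι * μ.real (Set.Ioi b))) ≤ P.real {ω | b < ⨆ i, X i ω} := by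
  set p := μ.real (Set.Ioi b)
  have hpow : (1 - p) ^ Fintype.card ι ≤ exp (-(Fintype.card ι * p)) :=
    calc (1 - p) ^ Fintype.card ι ≤ exp (-p) ^ Fintype.card ι :=
          pow_le_pow_left₀ (sub_nonneg.2 measureReal_le_one) (one_sub_le_exp_neg p) _
      _ = exp (-(Fintype.card ι * p)) := by rw [← exp_nat_mul]; ring_nf
  have hunion : 1 ≤ P.real {ω | b < ⨆ i, X i ω} + P.real {ω | ⨆ i, X i ω ≤ b} := by
    rw [← probReal_univ (μ := P)]
    refine le_trans (measureReal_mono fun ω _ => ?_) (measureReal_union_le _ _)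
    exact lt_or_ge b _
  linarith [measureReal_iSup_le_le_pow hX hμ hindep b]

lemma pow_mul_one_sub_exp_le_integral_pow_iSup [Fintype ι] [IsProbabilityMeasure P]
    [IsProbabilityMeasure μ] (hX : ∀ i, AEMeasurable (X i) P) (hμ : ∀ i, P.map (X i) = μ)
    (hindep : iIndepFun X P) (hμ0 : ∀ᵐ x ∂μ, 0 ≤ x) {k : ℕ}
    (hint : Integrable (fun x => x ^ k) μ) {b : ℝ} (hb : 0 ≤ b) :
    b ^ k * (1 - exp (-(Fintype.card ι * μ.real (Set.Ioi b)))) ≤ ∫ ω, (⨆ i, X i ω) ^ k ∂P := by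
  have hsub : {ω | b < ⨆ i, X i ω} ⊆ {ω | b ^ k ≤ (⨆ i, X i ω) ^ k} := fun ω hω =>
    pow_le_pow_left₀ hb (le_of_lt hω) k
  calc b ^ k * (1 - exp (-(Fintype.card ι * μ.real (Set.Ioi b))))
      ≤ b ^ k * P.real {ω | b ^ k ≤ (⨆ i, X i ω) ^ k} := by
        gcongr
        exact (one_sub_exp_le_measureReal_lt_iSup hX hμ hindep b).trans (measureReal_mono hsub)
    _ ≤ ∫ ω, (⨆ i, X i ω) ^ k ∂P := by
        refine mul_meas_ge_le_integral_of_nonneg ?_ (integrable_pow_iSup hX hμ hμ0 hint) _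
        filter_upwards [ae_forall_nonneg_of_map_eq hX hμ hμ0] with ω hω
        exact pow_nonneg (Real.iSup_nonneg hω) k

end MaxOfIdenticallyDistributed

section MaxOfChiSq1

variable {Ω : Type*} [MeasurableSpace Ω] {P : Measure Ω} [IsProbabilityMeasure P]
  {X : ℕ → Ω → ℝ}

lemma exists_tendsto_ge_integral_pow_iSup_div (hX : ∀ i, AEMeasurable (X i) P)
    (hμ : ∀ i, P.map (X i) = chiSq1) (k : ℕ) {δ : ℝ} (hδ : 0 < δ) :
    ∃ u : ℕ → ℝ, Tendsto u atTop (𝓝 ((1 + δ) ^ k)) ∧ ∀ᶠ n in atTop,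
      (∫ ω, (⨆ i : Fin n, X i ω) ^ k ∂P) / chiSq1MaxScale n ^ k ≤ u n := by
  set θ := 1 / (2 + δ)
  have hθ : θ < 1 / 2 := by simp only [θ]; gcongr; linarith
  have hθδ : 1 / 2 < θ * (1 + δ) := by
    rw [div_mul_eq_mul_div, one_mul, lt_div_iff₀ (by linarith)]
    linarith
  set C := ∫ x, x ^ k * exp (θ * x) ∂chiSq1
  have hC : 0 ≤ C := integral_nonneg_of_ae (ae_nonneg_chiSq1.mono fun x hx => by positivity)
  refine ⟨fun n => (1 + δ) ^ k + C * (n * exp (-(θ * (1 + δ) * chiSq1MaxScale n))), ?_, ?_⟩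
  · simpa using tendsto_const_nhds.add
      ((tendsto_natCast_mul_exp_neg_mul_chiSq1MaxScale_zero hθδ).const_mul C)
  filter_upwards [tendsto_chiSq1MaxScale_atTop.eventually_ge_atTop 1] with n ht
  set t := chiSq1MaxScale n
  have hmax := integral_pow_iSup_le (X := fun i : Fin n => X i) (fun i => hX i) (fun i => hμ i)
    ae_nonneg_chiSq1 (integrable_pow_chiSq1 k) (a := (1 + δ) * t) (by positivity)
  have htail := setIntegral_Ioi_pow_le_exp_mul ae_nonneg_chiSq1 (by positivity)
    (integrable_pow_mul_exp_mul_chiSq1 k hθ) ((1 + δ) * t)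
  have htk : 1 ≤ t ^ k := one_le_pow₀ ht
  rw [div_le_iff₀ (by positivity)]
  calc ∫ ω, (⨆ i : Fin n, X i ω) ^ k ∂P
      ≤ ((1 + δ) * t) ^ k + n * (exp (-(θ * ((1 + δ) * t))) * C) := by
        simp only [Fintype.card_fin] at hmax
        exact hmax.trans (by gcongr)
    _ ≤ ((1 + δ) ^ k + C * (n * exp (-(θ * (1 + δ) * t)))) * t ^ k := by
        rw [mul_pow, mul_assoc θ]
        have : 0 ≤ C * (n * exp (-(θ * ((1 + δ) * t)))) := by positivity
        nlinarith [mul_nonneg this (sub_nonneg.2 htk)]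

lemma exists_tendsto_le_integral_pow_iSup_div (hX : ∀ i, AEMeasurable (X i) P)
    (hμ : ∀ i, P.map (X i) = chiSq1) (hindep : iIndepFun X P) (k : ℕ) {δ : ℝ}
    (hδ : δ ∈ Set.Ioo 0 1) :
    ∃ l : ℕ → ℝ, Tendsto l atTop (𝓝 ((1 - δ) ^ k)) ∧ ∀ᶠ n in atTop,
      l n ≤ (∫ ω, (⨆ i : Fin n, X i ω) ^ k ∂P) / chiSq1MaxScale n ^ k := by
  obtain ⟨hδ0, hδ1⟩ := hδ
  set p : ℕ → ℝ := fun n => chiSq1.real (Set.Ioi ((1 - δ) * chiSq1MaxScale n))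
  refine ⟨fun n => (1 - δ) ^ k * (1 - exp (-(n * p n))), ?_, ?_⟩
  · set c := (√(2 * π))⁻¹ * exp (-(1 + 1 / δ) / 2)
    have hs : (1 + δ) / 2 * (1 - δ) < 1 / 2 := by nlinarith
    have hnp : Tendsto (fun n : ℕ => n * p n) atTop atTop := by
      refine tendsto_atTop_mono' _ ?_
        ((tendsto_natCast_mul_exp_neg_mul_chiSq1MaxScale_atTop hs).const_mul_atTop
          (by positivity : 0 < c))
      filter_upwards [tendsto_chiSq1MaxScale_atTop.eventually_ge_atTop 0] with n ht
      have hp := chiSq1_real_Ioi_ge hδ0 (b := (1 - δ) * chiSq1MaxScale n) (by nlinarith)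
      rw [← mul_assoc] at hp
      calc c * (n * exp (-((1 + δ) / 2 * (1 - δ) * chiSq1MaxScale n)))
          = n * (c * exp (-((1 + δ) / 2 * (1 - δ) * chiSq1MaxScale n))) := by ring
        _ ≤ n * p n := mul_le_mul_of_nonneg_left hp (Nat.cast_nonneg n)
    simpa using (tendsto_exp_atBot.comp (tendsto_neg_atTop_atBot.comp hnp)).const_sub 1
      |>.const_mul ((1 - δ) ^ k)
  filter_upwards [tendsto_chiSq1MaxScale_atTop.eventually_gt_atTop 0] with n ht
  have hlow := pow_mul_one_sub_exp_le_integral_pow_iSup (X := fun i : Fin n => X i)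
    (fun i => hX i) (fun i => hμ i) (hindep.precomp Fin.val_injective) ae_nonneg_chiSq1
    (integrable_pow_chiSq1 k) (b := (1 - δ) * chiSq1MaxScale n) (by nlinarith)
  rw [Fintype.card_fin, mul_pow] at hlow
  rw [le_div_iff₀ (by positivity)]
  linarith

end MaxOfChiSq1

theorem max_chiSq_normalized_moment_limit_general
    {Ω : Type*} [MeasureSpace Ω] [IsProbabilityMeasure (ℙ : Measure Ω)]
    (X : ℕ → Ω → ℝ) (hXmeas : ∀ i, Measurable (X i))
    (hXindep : iIndepFun X ℙ)
    (hXdist : ∀ i, Measure.map (X i) ℙ = chiSq1)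
    (t : ℕ → ℝ) (ht : ∀ n, t n = 2 * Real.log n - Real.log (Real.log n) - Real.log π)
    (k : ℕ) :
    Tendsto
      (fun n : ℕ =>
        (∫ ω, ((⨆ i : Fin n, X i ω)) ^ k ∂ℙ) / (t n) ^ k)
      atTop (nhds 1) := by
  obtain rfl : t = chiSq1MaxScale := funext ht
  have hX : ∀ i, AEMeasurable (X i) ℙ := fun i => (hXmeas i).aemeasurable
  refine tendsto_of_forall_exists_bounds (F := 𝓝[>] (0 : ℝ)) (L := fun δ => (1 - δ) ^ k)
    (U := fun δ => (1 + δ) ^ k)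
    (((by fun_prop : Continuous fun δ : ℝ => (1 - δ) ^ k).tendsto' 0 1 (by simp)).mono_left
      nhdsWithin_le_nhds)
    (((by fun_prop : Continuous fun δ : ℝ => (1 + δ) ^ k).tendsto' 0 1 (by simp)).mono_left
      nhdsWithin_le_nhds) ?_ ?_
  · filter_upwards [Ioo_mem_nhdsGT one_pos] with δ hδ using
      exists_tendsto_le_integral_pow_iSup_div hX hXdist hXindep k hδ
  · filter_upwards [self_mem_nhdsWithin] with δ hδ using
      exists_tendsto_ge_integral_pow_iSup_div hX hXdist k hδ

/-- For the maximum `X_{(1)}(n)` of `n` i.i.d. chi-squared(1) random variables and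
`t n = 2 log n - log log n - log π`, `E[X_{(1)}(n)^k] / t_n^k → 1` for each fixed
positive integer `k`. -/
theorem max_chiSq_normalized_moment_limit
    {Ω : Type*} [MeasureSpace Ω] [IsProbabilityMeasure (ℙ : Measure Ω)]
    (X : ℕ → Ω → ℝ) (hXmeas : ∀ i, Measurable (X i))
    (hXindep : iIndepFun X ℙ)
    (hXdist : ∀ i, Measure.map (X i) ℙ = chiSq1)
    (t : ℕ → ℝ) (ht : ∀ n, t n = 2 * Real.log n - Real.log (Real.log n) - Real.log π)
    (k : ℕ) (hk : 1 ≤ k) :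
    Tendsto
      (fun n : ℕ =>
        (∫ ω, ((⨆ i : Fin n, X i ω)) ^ k ∂ℙ) / (t n) ^ k)
      atTop (nhds 1) :=
  max_chiSq_normalized_moment_limit_general X hXmeas hXindep hXdist t ht k
end

section
/- For any j ∈ K* and any ρ > 0, the inequality P[ c̃_j² ≤ max_{i ∈ {1,…,n}\K*} c̃_i² ] ≤ 2 π^{−1/2} ρ^{−1/2} n^{−ρ} holds for all sufficiently large n. -/
/-!
Write `m = √n |β_j| / σ` for the absolute mean of `c̃_j`. If `c̃_j² ≤ max_i c̃_i²`, then either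
`|c̃_j - E c̃_j| ≥ m / 2` or some null coefficient has `|c̃_i| ≥ m / 2`. The Chernoff bound for a
centred Gaussian bounds each of these at most `n + 1` events by `2 exp (-m² / 8)`, a union bound
gives `2 (n + 1) exp (-n β_j² / (8 σ²))`, and this beats any constant multiple of `n^(-ρ)`.
-/

set_option autoImplicit false

open MeasureTheory ProbabilityTheory Filter Real
open scoped NNReal

namespace ProbabilityTheory

lemma hasSubgaussianMGF_sub_gaussianReal (μ : ℝ) (v : ℝ≥0) :
    HasSubgaussianMGF (fun x ↦ x - μ) v (gaussianReal μ v) := by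
  have hmap : (gaussianReal μ v).map (· - μ) = gaussianReal 0 v := by
    rw [gaussianReal_map_sub_const, sub_self]
  refine ⟨fun t ↦ ?_, fun t ↦ ?_⟩
  · rw [← mgf_pos_iff, mgf_gaussianReal hmap]
    exact exp_pos _
  · rw [mgf_gaussianReal hmap, zero_mul, zero_add]

lemma HasSubgaussianMGF.measureReal_abs_ge_le {Ω : Type*} {mΩ : MeasurableSpace Ω}
    {μ : Measure Ω} [IsFiniteMeasure μ] {X : Ω → ℝ} {c : ℝ≥0}
    (h : HasSubgaussianMGF X c μ) {ε : ℝ} (hε : 0 ≤ ε) :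
    μ.real {ω | ε ≤ |X ω|} ≤ 2 * exp (-ε ^ 2 / (2 * c)) := by
  have hsplit : {ω | ε ≤ |X ω|} = {ω | ε ≤ X ω} ∪ {ω | ε ≤ (-X) ω} := by
    ext ω
    simp only [Set.mem_ofPred_eq, Set.mem_union, Pi.neg_apply, le_abs]
  calc μ.real {ω | ε ≤ |X ω|}
      ≤ μ.real {ω | ε ≤ X ω} + μ.real {ω | ε ≤ (-X) ω} := hsplit ▸ measureReal_union_le _ _
    _ ≤ exp (-ε ^ 2 / (2 * c)) + exp (-ε ^ 2 / (2 * c)) :=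
        add_le_add (h.measure_ge_le hε) (h.neg.measure_ge_le hε)
    _ = 2 * exp (-ε ^ 2 / (2 * c)) := by ring

lemma measureReal_abs_sub_ge_le_of_map_eq_gaussianReal {Ω : Type*} {mΩ : MeasurableSpace Ω}
    {P : Measure Ω} [IsFiniteMeasure P] {X : Ω → ℝ} {μ : ℝ} {v : ℝ≥0}
    (hX : P.map X = gaussianReal μ v) {ε : ℝ} (hε : 0 ≤ ε) :
    P.real {ω | ε ≤ |X ω - μ|} ≤ 2 * exp (-ε ^ 2 / (2 * v)) := by
  have hXm : AEMeasurable X P := aemeasurable_of_map_neZero (by rw [hX]; infer_instance)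
  have hsub : HasSubgaussianMGF ((· - μ) ∘ X) v P :=
    .of_map hXm (hX ▸ hasSubgaussianMGF_sub_gaussianReal μ v)
  exact hsub.measureReal_abs_ge_le hε

end ProbabilityTheory

lemma exists_le_abs_of_sq_le_biSup_sq {ι : Type*} {S : Finset ι} {x t : ℝ} {y : ι → ℝ}
    (ht : 0 ≤ t) (hx : t < |x|) (h : x ^ 2 ≤ ⨆ i ∈ S, y i ^ 2) : ∃ i ∈ S, t ≤ |y i| := by
  by_contra! hy
  have hsup : ⨆ i ∈ S, y i ^ 2 ≤ t ^ 2 := by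
    refine Real.iSup_le (fun i ↦ Real.iSup_le (fun hi ↦ ?_) (sq_nonneg t)) (sq_nonneg t)
    rw [← sq_abs]
    exact pow_le_pow_left₀ (abs_nonneg _) (hy i hi).le 2
  have hx2 : t ^ 2 < x ^ 2 := sq_abs x ▸ pow_lt_pow_left₀ hx ht two_ne_zero
  linarith

open Finset in
lemma measureReal_sq_le_biSup_sq_le {Ω ι : Type*} {mΩ : MeasurableSpace Ω} {P : Measure Ω}
    [IsFiniteMeasure P] {X : Ω → ℝ} {Y : ι → Ω → ℝ} {S : Finset ι} {μ : ℝ} {v : ℝ≥0}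
    (hX : P.map X = gaussianReal μ v) (hY : ∀ i ∈ S, P.map (Y i) = gaussianReal 0 v) :
    P.real {ω | X ω ^ 2 ≤ ⨆ i ∈ S, Y i ω ^ 2} ≤ 2 * (#S + 1) * exp (-μ ^ 2 / (8 * v)) := by
  set t := |μ| / 2 with ht_def
  have ht : 0 ≤ t := by positivity
  have htail : exp (-t ^ 2 / (2 * v)) = exp (-μ ^ 2 / (8 * v)) := by
    rw [ht_def, div_pow, sq_abs]
    ring_nf
  have hsub : {ω | X ω ^ 2 ≤ ⨆ i ∈ S, Y i ω ^ 2}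
      ⊆ {ω | t ≤ |X ω - μ|} ∪ ⋃ i ∈ S, {ω | t ≤ |Y i ω - 0|} := by
    intro ω hω
    by_cases hXμ : t ≤ |X ω - μ|
    · exact Or.inl hXμ
    · have hXt : t < |X ω| := by
        have := abs_sub_abs_le_abs_sub μ (X ω)
        rw [abs_sub_comm] at this
        linarith
      obtain ⟨i, hi, hYi⟩ := exists_le_abs_of_sq_le_biSup_sq ht hXt hω
      exact Or.inr (Set.mem_biUnion hi (by simpa using hYi))
  calc P.real {ω | X ω ^ 2 ≤ ⨆ i ∈ S, Y i ω ^ 2}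
      ≤ P.real {ω | t ≤ |X ω - μ|} + ∑ i ∈ S, P.real {ω | t ≤ |Y i ω - 0|} :=
        (measureReal_mono hsub).trans <| (measureReal_union_le _ _).trans <|
          add_le_add_right (measureReal_biUnion_finset_le _ _) _
    _ ≤ 2 * exp (-t ^ 2 / (2 * v)) + ∑ _i ∈ S, 2 * exp (-t ^ 2 / (2 * v)) :=
        add_le_add (measureReal_abs_sub_ge_le_of_map_eq_gaussianReal hX ht)
          (sum_le_sum fun i hi ↦ measureReal_abs_sub_ge_le_of_map_eq_gaussianReal (hY i hi) ht)
    _ = 2 * (#S + 1) * exp (-μ ^ 2 / (8 * v)) := by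
        rw [sum_const, nsmul_eq_mul, htail]
        ring

lemma eventually_succ_mul_exp_neg_le_rpow_neg {b C : ℝ} (hb : 0 < b) (hC : 0 < C) (ρ : ℝ) :
    ∀ᶠ n : ℕ in atTop, ((n : ℝ) + 1) * exp (-b * n) ≤ C * (n : ℝ) ^ (-ρ) := by
  have hsmall : ∀ᶠ x : ℝ in atTop, x ^ (ρ + 1) * exp (-b * x) ≤ C / 2 :=
    ((tendsto_rpow_mul_exp_neg_mul_atTop_nhds_zero _ _ hb).eventually_le_const (by positivity))
  filter_upwards [tendsto_natCast_atTop_atTop.eventually hsmall, eventually_ge_atTop 1]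
    with n hn hn1
  have hn0 : (0 : ℝ) < n := by exact_mod_cast hn1
  have hsplit : (n : ℝ) = (n : ℝ) ^ (ρ + 1) * (n : ℝ) ^ (-ρ) := by
    rw [← rpow_add hn0, add_neg_cancel_comm, rpow_one]
  calc ((n : ℝ) + 1) * exp (-b * n) ≤ 2 * n * exp (-b * n) := by
        gcongr
        linarith [(Nat.one_le_cast.mpr hn1 : (1 : ℝ) ≤ n)]
    _ = 2 * ((n : ℝ) ^ (ρ + 1) * exp (-b * n)) * (n : ℝ) ^ (-ρ) := by
        nth_rw 1 [hsplit]
        ring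
    _ ≤ 2 * (C / 2) * (n : ℝ) ^ (-ρ) := by gcongr
    _ = C * (n : ℝ) ^ (-ρ) := by ring

theorem prob_true_component_dominated_general
    {Ω : Type*} [MeasureSpace Ω] [IsProbabilityMeasure (ℙ : Measure Ω)]
    (σ : ℝ) (hσ : 0 < σ)
    (Kstar : Finset ℕ) (hKne : Kstar.Nonempty) (hKpos : ∀ j ∈ Kstar, 1 ≤ j)
    (β : ℕ → ℝ) (hβ : ∀ j, β j ≠ 0 ↔ j ∈ Kstar)
    (c : ℕ → ℕ → Ω → ℝ)
    (hdist : ∀ n, Kstar.max' hKne < n → ∀ j ∈ Finset.Icc 1 n,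
      Measure.map (c n j) ℙ = gaussianReal (Real.sqrt n * β j / σ) 1)
    (j : ℕ) (hj : j ∈ Kstar) (ρ : ℝ) (hρ : 0 < ρ) :
    ∃ N : ℕ, ∀ n ≥ N,
      (ℙ {ω | (c n j ω) ^ 2 ≤ ⨆ i ∈ (Finset.Icc 1 n \ Kstar), (c n i ω) ^ 2}).toReal
        ≤ 2 * π ^ (-(1 : ℝ) / 2) * ρ ^ (-(1 : ℝ) / 2) * (n : ℝ) ^ (-ρ) := by
  have hrate : 0 < β j ^ 2 / (8 * σ ^ 2) := by
    have := (hβ j).2 hj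
    positivity
  have hC : 0 < 2 * π ^ (-(1 : ℝ) / 2) * ρ ^ (-(1 : ℝ) / 2) / 2 := by
    have := rpow_pos_of_pos pi_pos (-(1 : ℝ) / 2)
    have := rpow_pos_of_pos hρ (-(1 : ℝ) / 2)
    positivity
  rw [← eventually_atTop]
  filter_upwards [eventually_gt_atTop (Kstar.max' hKne),
    eventually_succ_mul_exp_neg_le_rpow_neg hrate hC ρ] with n hn hdecay
  have hjn : j ∈ Finset.Icc 1 n :=
    Finset.mem_Icc.2 ⟨hKpos j hj, (Kstar.le_max' j hj).trans hn.le⟩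
  have hnull : ∀ i ∈ Finset.Icc 1 n \ Kstar, Measure.map (c n i) ℙ = gaussianReal 0 1 := by
    intro i hi
    obtain ⟨hin, hiK⟩ := Finset.mem_sdiff.1 hi
    rw [hdist n hn i hin, not_ne_iff.1 (mt (hβ i).1 hiK), mul_zero, zero_div]
  have hcard : ((Finset.Icc 1 n \ Kstar).card : ℝ) ≤ n := by
    exact_mod_cast (Finset.card_le_card Finset.sdiff_subset).trans (Nat.card_Icc 1 n).le
  have hexp : -(√n * β j / σ) ^ 2 / (8 * 1) = -(β j ^ 2 / (8 * σ ^ 2)) * n := by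
    rw [mul_one, div_pow, mul_pow, sq_sqrt n.cast_nonneg]
    field_simp
  calc (ℙ {ω | (c n j ω) ^ 2 ≤ ⨆ i ∈ (Finset.Icc 1 n \ Kstar), (c n i ω) ^ 2}).toReal
      ≤ 2 * ((Finset.Icc 1 n \ Kstar).card + 1) * exp (-(√n * β j / σ) ^ 2 / (8 * 1)) :=
        measureReal_sq_le_biSup_sq_le (hdist n hn j hjn) hnull
    _ ≤ 2 * ((n : ℝ) + 1) * exp (-(β j ^ 2 / (8 * σ ^ 2)) * n) := by
        rw [hexp]
        gcongr
    _ ≤ _ := by linarith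

/-- For a true component `j ∈ K*` (so that `c̃_j ~ N(√n β_j/σ, 1)` with `β_j ≠ 0`) and any
`ρ > 0`, the probability that `c̃_j²` is dominated by the largest squared coefficient of the
non-true components is at most `2 π^{-1/2} ρ^{-1/2} n^{-ρ}` for all sufficiently large `n`. -/
theorem prob_true_component_dominated
    {Ω : Type*} [MeasureSpace Ω] [IsProbabilityMeasure (ℙ : Measure Ω)]
    (σ : ℝ) (hσ : 0 < σ)
    (Kstar : Finset ℕ) (hKne : Kstar.Nonempty) (hKpos : ∀ j ∈ Kstar, 1 ≤ j)
    (β : ℕ → ℝ) (hβ : ∀ j, β j ≠ 0 ↔ j ∈ Kstar)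
    (c : ℕ → ℕ → Ω → ℝ) (hmeas : ∀ n j, Measurable (c n j))
    (hdist : ∀ n, Kstar.max' hKne < n → ∀ j ∈ Finset.Icc 1 n,
      Measure.map (c n j) ℙ = gaussianReal (Real.sqrt n * β j / σ) 1)
    (hindep : ∀ n, Kstar.max' hKne < n →
      iIndepFun
        (fun j : (Finset.Icc 1 n : Finset ℕ) => c n (j : ℕ)) ℙ)
    (j : ℕ) (hj : j ∈ Kstar) (ρ : ℝ) (hρ : 0 < ρ) :
    ∃ N : ℕ, ∀ n ≥ N,
      (ℙ {ω | (c n j ω) ^ 2 ≤ ⨆ i ∈ (Finset.Icc 1 n \ Kstar), (c n i ω) ^ 2}).toReal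
        ≤ 2 * π ^ (-(1 : ℝ) / 2) * ρ ^ (-(1 : ℝ) / 2) * (n : ℝ) ^ (-ρ) :=
  prob_true_component_dominated_general σ hσ Kstar hKne hKpos β hβ c hdist j hj ρ hρ
end

section
/- For any j ∈ K* and any ρ > 0, setting τ_{n,ρ} = 2(ρ+1) log n, the inequality P[ c̃_j² ≤ τ_{n,ρ} ] ≤ π^{−1/2} ρ^{−1/2} n^{−ρ} holds for all sufficiently large n. -/
set_option autoImplicit false

open MeasureTheory ProbabilityTheory Filter Real

/-!
The mean `μₙ = √n βⱼ / σ` of `c̃ⱼ` grows like `√n`, while the threshold `√τₙ` only grows like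
`√(log n)`. Once `2√τₙ ≤ |μₙ|`, every point of `{x | x² ≤ τₙ} = [-√τₙ, √τₙ]` is at distance at
least `|μₙ| / 2` from `μₙ`, so the probability is at most `2√τₙ · exp(-μₙ² / 8)`: this decays
like `exp(-c n)`, much faster than `n^{-ρ}`.
-/

lemma gaussianPDFReal_one_le_exp (μ x : ℝ) :
    gaussianPDFReal μ 1 x ≤ exp (-(x - μ) ^ 2 / 2) := by
  have hnorm : (√(2 * π))⁻¹ ≤ 1 :=
    inv_le_one_of_one_le₀ (Real.one_le_sqrt.mpr (by linarith [Real.pi_gt_three]))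
  simpa [gaussianPDFReal_def] using mul_le_of_le_one_left (exp_pos _).le hnorm

lemma gaussianReal_real_le_of_gaussianPDFReal_le (μ : ℝ) {v : NNReal} (hv : v ≠ 0)
    {s : Set ℝ} (hs : volume s < ⊤) {C : ℝ} (hC : ∀ x ∈ s, gaussianPDFReal μ v x ≤ C) :
    (gaussianReal μ v).real s ≤ C * volume.real s := by
  rw [measureReal_def, gaussianReal_apply_eq_integral μ hv,
    ENNReal.toReal_ofReal (setIntegral_nonneg_of_ae (ae_of_all _ (gaussianPDFReal_nonneg μ v)))]
  refine (le_abs_self _).trans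
    (norm_setIntegral_le_of_norm_le_const (f := gaussianPDFReal μ v) hs fun x hx => ?_)
  rw [Real.norm_of_nonneg (gaussianPDFReal_nonneg μ v x)]
  exact hC x hx

lemma gaussianReal_real_sq_le_le {μ τ : ℝ} (hτ : 0 ≤ τ) (hμ : 2 * √τ ≤ |μ|) :
    (gaussianReal μ 1).real {x | x ^ 2 ≤ τ} ≤ 2 * √τ * exp (-μ ^ 2 / 8) := by
  have hset : {x : ℝ | x ^ 2 ≤ τ} = Set.Icc (-√τ) √τ := by
    ext x
    exact Real.sq_le hτ
  have hpdf : ∀ x ∈ Set.Icc (-√τ) √τ, gaussianPDFReal μ 1 x ≤ exp (-μ ^ 2 / 8) := by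
    intro x hx
    have hx : |x| ≤ √τ := abs_le.mpr hx
    have hfar : |μ| / 2 ≤ |x - μ| := by
      linarith [abs_sub_abs_le_abs_sub μ x, abs_sub_comm μ x]
    have hsq : μ ^ 2 / 4 ≤ (x - μ) ^ 2 := by
      have := pow_le_pow_left₀ (by positivity) hfar 2
      rw [div_pow, sq_abs, sq_abs] at this
      linarith
    exact (gaussianPDFReal_one_le_exp μ x).trans (exp_le_exp.mpr (by linarith))
  rw [hset]
  calc (gaussianReal μ 1).real (Set.Icc (-√τ) √τ)
      ≤ exp (-μ ^ 2 / 8) * volume.real (Set.Icc (-√τ) √τ) :=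
        gaussianReal_real_le_of_gaussianPDFReal_le μ one_ne_zero measure_Icc_lt_top hpdf
    _ = 2 * √τ * exp (-μ ^ 2 / 8) := by
        rw [Real.volume_real_Icc_of_le (by linarith [Real.sqrt_nonneg τ])]
        ring

lemma eventually_mul_log_le_mul (k : ℝ) {ε : ℝ} (hε : 0 < ε) :
    ∀ᶠ x in atTop, k * log x ≤ ε * x := by
  filter_upwards [(isLittleO_log_id_atTop.const_mul_left k).bound hε, eventually_ge_atTop 0]
    with x hx hx0
  rw [Real.norm_eq_abs, id, Real.norm_of_nonneg hx0] at hx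
  exact (le_abs_self _).trans hx

lemma eventually_sqrt_mul_exp_neg_le {a C : ℝ} (ha : 0 < a) (hC : 0 < C) (ρ : ℝ) :
    ∀ᶠ x in atTop, √x * exp (-a * x) ≤ C * x ^ (-ρ) := by
  filter_upwards
    [(tendsto_rpow_mul_exp_neg_mul_atTop_nhds_zero (ρ + 1 / 2) a ha).eventually_le_const hC,
    eventually_gt_atTop 0] with x hx hx0
  have hsplit : √x = x ^ (ρ + 1 / 2) * x ^ (-ρ) := by
    rw [← Real.rpow_add hx0, Real.sqrt_eq_rpow]
    ring_nf
  rw [hsplit, mul_right_comm]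
  exact mul_le_mul_of_nonneg_right hx (by positivity)

lemma eventually_gaussianReal_real_sq_le_mul_log_le {m k C : ℝ} (hm : m ≠ 0) (hk : 0 ≤ k)
    (hC : 0 < C) (ρ : ℝ) :
    ∀ᶠ n : ℕ in atTop,
      (gaussianReal (√n * m) 1).real {x | x ^ 2 ≤ k * log n} ≤ C * (n : ℝ) ^ (-ρ) := by
  have hm' : 0 < |m| := abs_pos.mpr hm
  filter_upwards
    [tendsto_natCast_atTop_atTop.eventually (eventually_mul_log_le_mul (4 * k) (pow_pos hm' 2)),
    tendsto_natCast_atTop_atTop.eventually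
      (eventually_sqrt_mul_exp_neg_le (by positivity : 0 < |m| ^ 2 / 8) (div_pos hC hm') ρ)]
    with n hlog hdecay
  have hτ : 0 ≤ k * log n := by positivity
  have habs : |√n * m| = |m| * √n := by
    rw [abs_mul, abs_of_nonneg (Real.sqrt_nonneg _), mul_comm]
  have hthreshold : 2 * √(k * log n) ≤ |√n * m| := by
    rw [habs, ← pow_le_pow_iff_left₀ (by positivity) (by positivity) two_ne_zero, mul_pow, mul_pow,
      Real.sq_sqrt hτ, Real.sq_sqrt n.cast_nonneg]
    linarith
  calc (gaussianReal (√n * m) 1).real {x | x ^ 2 ≤ k * log n}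
      ≤ 2 * √(k * log n) * exp (-(√n * m) ^ 2 / 8) := gaussianReal_real_sq_le_le hτ hthreshold
    _ ≤ |√n * m| * exp (-(√n * m) ^ 2 / 8) := by gcongr
    _ = |m| * (√n * exp (-(|m| ^ 2 / 8) * n)) := by
        rw [← sq_abs (√n * m), habs, mul_pow, Real.sq_sqrt n.cast_nonneg]
        ring_nf
    _ ≤ |m| * (C / |m| * (n : ℝ) ^ (-ρ)) := by gcongr
    _ = C * (n : ℝ) ^ (-ρ) := by field_simp

lemma measureReal_preimage_eq_of_map_eq {Ω α : Type*} [MeasurableSpace Ω] [MeasurableSpace α]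
    {P : Measure Ω} {X : Ω → α} {ν : Measure α} [NeZero ν] (hX : P.map X = ν) {s : Set α}
    (hs : MeasurableSet s) : P.real (X ⁻¹' s) = ν.real s := by
  -- `Measure.map` of a non-AE-measurable function is `0`, so a nonzero law forces measurability.
  have hXm : AEMeasurable X P := .of_map_ne_zero (hX ▸ NeZero.ne ν)
  rw [← hX, measureReal_def, measureReal_def, Measure.map_apply_of_aemeasurable hXm hs]

theorem prob_true_component_below_threshold_general
    {Ω : Type*} [MeasureSpace Ω] [IsProbabilityMeasure (ℙ : Measure Ω)]
    (σ : ℝ) (hσ : 0 < σ)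
    (Kstar : Finset ℕ) (hKne : Kstar.Nonempty) (hKpos : ∀ j ∈ Kstar, 1 ≤ j)
    (β : ℕ → ℝ) (hβ : ∀ j, β j ≠ 0 ↔ j ∈ Kstar)
    (c : ℕ → ℕ → Ω → ℝ)
    (hdist : ∀ n, Kstar.max' hKne < n → ∀ j ∈ Finset.Icc 1 n,
      Measure.map (c n j) ℙ = gaussianReal (Real.sqrt n * β j / σ) 1)
    (j : ℕ) (hj : j ∈ Kstar) (ρ : ℝ) (hρ : 0 < ρ) :
    ∃ N : ℕ, ∀ n ≥ N,
      (ℙ {ω | (c n j ω) ^ 2 ≤ 2 * (ρ + 1) * Real.log n}).toReal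
        ≤ π ^ (-(1 : ℝ) / 2) * ρ ^ (-(1 : ℝ) / 2) * (n : ℝ) ^ (-ρ) := by
  have hm : β j / σ ≠ 0 := div_ne_zero ((hβ j).mpr hj) hσ.ne'
  rw [← eventually_atTop]
  filter_upwards [eventually_gt_atTop (Kstar.max' hKne),
    eventually_gaussianReal_real_sq_le_mul_log_le hm (by positivity : 0 ≤ 2 * (ρ + 1))
      (by positivity : 0 < π ^ (-(1 : ℝ) / 2) * ρ ^ (-(1 : ℝ) / 2)) ρ] with n hn hbound
  have hlaw : Measure.map (c n j) ℙ = gaussianReal (√n * (β j / σ)) 1 := by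
    rw [← mul_div_assoc]
    exact hdist n hn j (Finset.mem_Icc.mpr ⟨hKpos j hj, (Finset.le_max' _ _ hj).trans hn.le⟩)
  rw [← measureReal_def]
  exact (measureReal_preimage_eq_of_map_eq hlaw
    (measurableSet_le (f := fun x : ℝ => x ^ 2) (by fun_prop) measurable_const)).trans_le hbound

/-- For a true component `j ∈ K*` (so that `c̃_j ~ N(√n β_j/σ, 1)` with `β_j ≠ 0`) and any
`ρ > 0`, setting `τ_{n,ρ} = 2(ρ+1) log n`, the probability `P[c̃_j² ≤ τ_{n,ρ}]` is at most
`π^{-1/2} ρ^{-1/2} n^{-ρ}` for all sufficiently large `n`. -/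
theorem prob_true_component_below_threshold
    {Ω : Type*} [MeasureSpace Ω] [IsProbabilityMeasure (ℙ : Measure Ω)]
    (σ : ℝ) (hσ : 0 < σ)
    (Kstar : Finset ℕ) (hKne : Kstar.Nonempty) (hKpos : ∀ j ∈ Kstar, 1 ≤ j)
    (β : ℕ → ℝ) (hβ : ∀ j, β j ≠ 0 ↔ j ∈ Kstar)
    (c : ℕ → ℕ → Ω → ℝ) (hmeas : ∀ n j, Measurable (c n j))
    (hdist : ∀ n, Kstar.max' hKne < n → ∀ j ∈ Finset.Icc 1 n,
      Measure.map (c n j) ℙ = gaussianReal (Real.sqrt n * β j / σ) 1)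
    (hindep : ∀ n, Kstar.max' hKne < n →
      iIndepFun
        (fun j : (Finset.Icc 1 n : Finset ℕ) => c n (j : ℕ)) ℙ)
    (j : ℕ) (hj : j ∈ Kstar) (ρ : ℝ) (hρ : 0 < ρ) :
    ∃ N : ℕ, ∀ n ≥ N,
      (ℙ {ω | (c n j ω) ^ 2 ≤ 2 * (ρ + 1) * Real.log n}).toReal
        ≤ π ^ (-(1 : ℝ) / 2) * ρ ^ (-(1 : ℝ) / 2) * (n : ℝ) ^ (-ρ) :=
  prob_true_component_below_threshold_general σ hσ Kstar hKne hKpos β hβ c hdist j hj ρ hρ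
end

section
/- For each fixed positive integer m, lim_{n→∞} E[ c̃_{p₁}^{2m} · 1_{Ē_n*} ] = 0, where c̃_{p₁} is the coefficient with the largest absolute value and 1_{Ē_n*} is the indicator of the complement of E_n*. -/
/-!
Let `t = √n · min_{K*} |β_j| / (2σ)`, half the smallest signal mean. Off `E_n*` some index outside
`K*` is ranked above some index of `K*`, so either that null coefficient has `|c̃| ≥ t` or that
signal coefficient has `|c̃| < t`; either way some `c̃_j` deviates from its mean by at least `t`.
Hence `S = ∑_j ((c̃_j - 𝔼 c̃_j) / t) ^ (2q) ≥ 1` there, and `𝔼 S = O(n^{1-q})`. On the other hand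
`(c̃_{p₁} ^ (2m)) ^ 2 ≤ ∑_j c̃_j ^ (4m)`, of expectation `O(n^{2m+1})`. Young's inequality
`x ≤ ε x² + 1/(4ε)` bounds the integrand on the bad event by `ε ∑_j c̃_j ^ (4m) + S / (4ε)`, and
`ε = n^{-(2m+2)}`, `q = 2m + 4` make both expectations `O(1/n)`.
-/

open MeasureTheory ProbabilityTheory Filter Real
open scoped NNReal

lemma integrable_pow_gaussianReal (μ : ℝ) (v : ℝ≥0) (k : ℕ) :
    Integrable (fun x : ℝ => x ^ k) (gaussianReal μ v) :=
  (memLp_id_gaussianReal k).integrable_norm_pow'.mono' (by fun_prop)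
    (ae_of_all _ fun x => by simp [norm_pow])

namespace ProbabilityTheory

variable {Ω : Type*} {mΩ : MeasurableSpace Ω} {P : Measure Ω} {X : Ω → ℝ} {μ : ℝ} {v : ℝ≥0}

lemma HasLaw.integrable_pow_of_gaussianReal (hX : HasLaw X (gaussianReal μ v) P) (k : ℕ) :
    Integrable (fun ω => X ω ^ k) P := by
  have := integrable_pow_gaussianReal μ v k
  rw [← hX.map_eq] at this
  exact (integrable_map_measure (g := fun x : ℝ => x ^ k)
    (measurable_id.pow_const k).aestronglyMeasurable hX.aemeasurable).mp this

lemma HasLaw.sub_const_of_gaussianReal (hX : HasLaw X (gaussianReal μ v) P) :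
    HasLaw (fun ω => X ω - μ) (gaussianReal 0 v) P :=
  MeasurePreserving.fun_comp_hasLaw (Y := (· - μ))
    ⟨measurable_sub_const μ, by rw [gaussianReal_map_sub_const, sub_self]⟩ hX

lemma HasLaw.integral_even_pow_le_of_gaussianReal [IsProbabilityMeasure P]
    (hX : HasLaw X (gaussianReal μ v) P) (k : ℕ) :
    ∫ ω, X ω ^ (2 * k) ∂P ≤
      2 ^ (2 * k - 1) * (∫ x, x ^ (2 * k) ∂gaussianReal 0 v + μ ^ (2 * k)) := by
  have hZ := hX.sub_const_of_gaussianReal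
  calc ∫ ω, X ω ^ (2 * k) ∂P
      ≤ ∫ ω, 2 ^ (2 * k - 1) * ((X ω - μ) ^ (2 * k) + μ ^ (2 * k)) ∂P := by
        refine integral_mono (hX.integrable_pow_of_gaussianReal _)
          (((hZ.integrable_pow_of_gaussianReal _).add (integrable_const _)).const_mul _)
          fun ω => ?_
        simpa using (even_two_mul k).add_pow_le (a := X ω - μ) (b := μ)
    _ = _ := by
        rw [integral_const_mul, integral_add (hZ.integrable_pow_of_gaussianReal _)
          (integrable_const _), integral_const, ← hZ.integral_comp (by fun_prop)]
        simp

end ProbabilityTheory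

/- The `K.card` top-ranked indices contain `p l ∉ K`, so they miss some `j ∈ K`, whose rank
exceeds `K.card ≥ l`. -/
lemma exists_lt_of_rank_le_card_notMem {n : ℕ} {K : Finset ℕ} {p : ℕ → ℕ} {a : ℕ → ℝ}
    (hK : K ⊆ Finset.Icc 1 n) (hp : Set.BijOn p (Set.Icc 1 n) (Set.Icc 1 n))
    (ha : StrictAntiOn (fun l => a (p l)) (Set.Icc 1 n)) {l : ℕ} (hl : l ∈ Set.Icc 1 K.card)
    (hpl : p l ∉ K) : ∃ j ∈ K, a j < a (p l) := by
  have hKn : K.card ≤ n := by simpa using Finset.card_le_card hK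
  have hsub : Set.Icc 1 K.card ⊆ Set.Icc 1 n := Set.Icc_subset_Icc_right hKn
  set top := (Finset.Icc 1 K.card).image p
  have htop : top.card = K.card := by
    rw [Finset.card_image_of_injOn (hp.injOn.mono (by simpa using hsub)), Nat.card_Icc,
      Nat.add_sub_cancel]
  obtain ⟨j, hjK, hjtop⟩ : ∃ j ∈ K, j ∉ top := by
    by_contra! hKtop
    have hKeq := Finset.eq_of_subset_of_card_le hKtop htop.le
    exact hpl (hKeq ▸ Finset.mem_image_of_mem p (by simpa using hl))
  obtain ⟨r, hr, rfl⟩ := hp.surjOn (by simpa using hK hjK)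
  have hlr : l < r := by
    by_contra! hrl
    exact hjtop (Finset.mem_image_of_mem p (Finset.mem_Icc.mpr ⟨hr.1, hrl.trans hl.2⟩))
  exact ⟨p r, hjK, ha (hsub hl) hr hlr⟩

lemma le_abs_or_le_abs_sub_of_abs_lt {x y θ t : ℝ} (hθ : 2 * t ≤ |θ|) (hxy : |y| < |x|) :
    t ≤ |x| ∨ t ≤ |y - θ| := by
  by_contra! h
  have hθy := abs_sub_abs_le_abs_sub θ y
  rw [abs_sub_comm] at hθy
  linarith [h.1, h.2]

lemma le_mul_sq_add_inv (x : ℝ) {ε : ℝ} (hε : 0 < ε) : x ≤ ε * x ^ 2 + (4 * ε)⁻¹ := by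
  have hε4 : ε * (4 * ε)⁻¹ = 1 / 4 := by field_simp
  nlinarith [sq_nonneg (2 * ε * x - 1)]

lemma setIntegral_le_of_sq_le_of_one_le {Ω : Type*} {mΩ : MeasurableSpace Ω} {P : Measure Ω}
    {f W S : Ω → ℝ} {s : Set Ω} (hs : MeasurableSet s) (hf : AEStronglyMeasurable f P)
    (hW : Integrable W P) (hS : Integrable S P) (hfW : ∀ᵐ ω ∂P, f ω ^ 2 ≤ W ω)
    (hS0 : 0 ≤ᵐ[P] S) (hSs : ∀ᵐ ω ∂P, ω ∈ s → 1 ≤ S ω) {ε : ℝ} (hε : 0 < ε) :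
    ∫ ω in s, f ω ∂P ≤ ε * ∫ ω, W ω ∂P + (4 * ε)⁻¹ * ∫ ω, S ω ∂P := by
  have hg : Integrable (fun ω => ε * W ω + (4 * ε)⁻¹ * S ω) P :=
    (hW.const_mul ε).add (hS.const_mul _)
  have hfg : ∀ᵐ ω ∂P, ω ∈ s → |f ω| ≤ ε * W ω + (4 * ε)⁻¹ * S ω := by
    filter_upwards [hfW, hSs] with ω hω hωs hmem
    have hε' : 0 < (4 * ε)⁻¹ := by positivity
    calc |f ω| ≤ ε * |f ω| ^ 2 + (4 * ε)⁻¹ := le_mul_sq_add_inv _ hε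
      _ ≤ ε * W ω + (4 * ε)⁻¹ * S ω := by
        rw [sq_abs]
        gcongr
        exact le_mul_of_one_le_right hε'.le (hωs hmem)
  have hfs : IntegrableOn f s P :=
    hg.integrableOn.mono' hf.restrict ((ae_restrict_iff' hs).mpr hfg)
  calc ∫ ω in s, f ω ∂P ≤ ∫ ω in s, ε * W ω + (4 * ε)⁻¹ * S ω ∂P :=
        setIntegral_mono_on_ae hfs hg.integrableOn hs
          (hfg.mono fun ω h hmem => (le_abs_self _).trans (h hmem))
    _ ≤ ∫ ω, ε * W ω + (4 * ε)⁻¹ * S ω ∂P := by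
        refine setIntegral_le_integral hg ?_
        filter_upwards [hfW, hS0] with ω hω hω'
        have hW0 := (sq_nonneg (f ω)).trans hω
        have hSω : 0 ≤ S ω := hω'
        positivity
    _ = ε * ∫ ω, W ω ∂P + (4 * ε)⁻¹ * ∫ ω, S ω ∂P := by
        rw [integral_add (hW.const_mul ε) (hS.const_mul _), integral_const_mul, integral_const_mul]

lemma exists_le_abs_sub_of_rank_le_card_notMem {n : ℕ} {K : Finset ℕ} {p : ℕ → ℕ}
    {x θ : ℕ → ℝ} {t : ℝ} (hK : K ⊆ Finset.Icc 1 n)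
    (hp : Set.BijOn p (Set.Icc 1 n) (Set.Icc 1 n))
    (hx : StrictAntiOn (fun l => |x (p l)|) (Set.Icc 1 n)) (hθK : ∀ j ∈ K, 2 * t ≤ |θ j|)
    (hθ0 : ∀ j ∉ K, θ j = 0) (hbad : ∃ l ∈ Set.Icc 1 K.card, p l ∉ K) :
    ∃ k ∈ Finset.Icc 1 n, t ≤ |x k - θ k| := by
  obtain ⟨l, hl, hpl⟩ := hbad
  obtain ⟨j, hjK, hjl⟩ :=
    exists_lt_of_rank_le_card_notMem (a := fun j => |x j|) hK hp hx hl hpl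
  have hplIcc : p l ∈ Finset.Icc 1 n := by
    simpa using hp.mapsTo (Set.Icc_subset_Icc_right (by simpa using Finset.card_le_card hK) hl)
  rcases le_abs_or_le_abs_sub_of_abs_lt (hθK j hjK) hjl with h | h
  · exact ⟨p l, hplIcc, by rwa [hθ0 _ hpl, sub_zero]⟩
  · exact ⟨j, hK hjK, h⟩

lemma measurableSet_rank_notMem {Ω : Type*} {mΩ : MeasurableSpace Ω} {K : Finset ℕ}
    {p : Ω → ℕ → ℕ} (hp : ∀ l, Measurable fun ω => p ω l) (L : ℕ) :
    MeasurableSet {ω | ∃ l ∈ Set.Icc 1 L, p ω l ∉ K} := by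
  have hunion : {ω | ∃ l ∈ Set.Icc 1 L, p ω l ∉ K} =
      ⋃ l ∈ Set.Icc 1 L, (fun ω => p ω l) ⁻¹' (↑K)ᶜ := by
    ext ω; simp
  rw [hunion]
  exact .biUnion (Set.to_countable _) fun l _ => hp l (Set.to_countable _).measurableSet.compl

section

variable {Ω : Type*} [MeasureSpace Ω] {n : ℕ}
  {K : Finset ℕ} {X : ℕ → Ω → ℝ} {θ : ℕ → ℝ} {p : Ω → ℕ → ℕ}

lemma integral_sum_pow_le [IsProbabilityMeasure (ℙ : Measure Ω)]
    (hX : ∀ j ∈ Finset.Icc 1 n, HasLaw (X j) (gaussianReal (θ j) 1) ℙ)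
    {A : ℝ} (hθA : ∀ j ∈ Finset.Icc 1 n, |θ j| ≤ A) (k : ℕ) :
    ∫ ω, ∑ j ∈ Finset.Icc 1 n, X j ω ^ (2 * k) ≤
      n * (2 ^ (2 * k - 1) * (∫ x, x ^ (2 * k) ∂gaussianReal 0 1 + A ^ (2 * k))) := by
  rw [integral_finsetSum _ fun j hj => (hX j hj).integrable_pow_of_gaussianReal _]
  calc ∑ j ∈ Finset.Icc 1 n, ∫ ω, X j ω ^ (2 * k)
      ≤ ∑ j ∈ Finset.Icc 1 n,
          2 ^ (2 * k - 1) * (∫ x, x ^ (2 * k) ∂gaussianReal 0 1 + A ^ (2 * k)) := by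
        refine Finset.sum_le_sum fun j hj =>
          ((hX j hj).integral_even_pow_le_of_gaussianReal k).trans ?_
        rw [← (even_two_mul k).pow_abs (θ j)]
        gcongr
        exact hθA j hj
    _ = _ := by simp

lemma integral_sum_sub_pow_div
    (hX : ∀ j ∈ Finset.Icc 1 n, HasLaw (X j) (gaussianReal (θ j) 1) ℙ) (t : ℝ) (k : ℕ) :
    ∫ ω, (∑ j ∈ Finset.Icc 1 n, (X j ω - θ j) ^ k) / t ^ k =
      n * (∫ x, x ^ k ∂gaussianReal 0 1) / t ^ k := by
  have hZ := fun j hj => (hX j hj).sub_const_of_gaussianReal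
  have hmoment : ∀ j ∈ Finset.Icc 1 n,
      ∫ ω, (X j ω - θ j) ^ k = ∫ x, x ^ k ∂gaussianReal 0 1 :=
    fun j hj => (hZ j hj).integral_comp (f := fun x => x ^ k) (by fun_prop)
  rw [integral_div, integral_finsetSum _ fun j hj => (hZ j hj).integrable_pow_of_gaussianReal _,
    Finset.sum_congr rfl hmoment]
  simp

theorem setIntegral_pow_rank_notMem_le [IsProbabilityMeasure (ℙ : Measure Ω)]
    (hn : 1 ≤ n) (hK : K ⊆ Finset.Icc 1 n) (hXmeas : ∀ j, Measurable (X j))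
    (hX : ∀ j ∈ Finset.Icc 1 n, HasLaw (X j) (gaussianReal (θ j) 1) ℙ)
    {t A : ℝ} (ht : 0 < t) (hθK : ∀ j ∈ K, 2 * t ≤ |θ j|) (hθ0 : ∀ j ∉ K, θ j = 0)
    (hθA : ∀ j ∈ Finset.Icc 1 n, |θ j| ≤ A)
    (hpmeas : ∀ l, Measurable fun ω => p ω l)
    (hp : ∀ᵐ ω, Set.BijOn (p ω) (Set.Icc 1 n) (Set.Icc 1 n) ∧
      StrictAntiOn (fun l => |X (p ω l) ω|) (Set.Icc 1 n))
    (m q : ℕ) {ε : ℝ} (hε : 0 < ε) :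
    ∫ ω in {ω | ∃ l ∈ Set.Icc 1 K.card, p ω l ∉ K}, X (p ω 1) ω ^ (2 * m) ≤
      ε * (n * (2 ^ (2 * (2 * m) - 1) *
        (∫ x, x ^ (2 * (2 * m)) ∂gaussianReal 0 1 + A ^ (2 * (2 * m))))) +
      (4 * ε)⁻¹ * (n * (∫ x, x ^ (2 * q) ∂gaussianReal 0 1) / t ^ (2 * q)) := by
  have hev (x : ℝ) (k : ℕ) : 0 ≤ x ^ (2 * k) := (even_two_mul k).pow_nonneg x
  have hY : Measurable fun ω => X (p ω 1) ω :=
    (measurable_from_prod_countable_left (f := fun z : Ω × ℕ => X z.2 z.1) hXmeas).comp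
      (measurable_id.prodMk (hpmeas 1))
  refine (setIntegral_le_of_sq_le_of_one_le (measurableSet_rank_notMem hpmeas _)
    (hY.pow_const _).aestronglyMeasurable
    (integrable_finsetSum _ fun j hj => (hX j hj).integrable_pow_of_gaussianReal (2 * (2 * m)))
    ((integrable_finsetSum _ fun j hj =>
      (hX j hj).sub_const_of_gaussianReal.integrable_pow_of_gaussianReal (2 * q)).div_const
      (t ^ (2 * q)))
    ?_ (ae_of_all _ fun ω => div_nonneg (Finset.sum_nonneg fun j _ => hev _ _)
      (pow_pos ht _).le) ?_ hε).trans ?_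
  · filter_upwards [hp] with ω hω
    rw [← pow_mul, mul_comm _ 2]
    exact Finset.single_le_sum (f := fun j => X j ω ^ (2 * (2 * m))) (fun j _ => hev _ _)
      (by simpa using hω.1.mapsTo ⟨le_rfl, hn⟩)
  · filter_upwards [hp] with ω hω hbad
    obtain ⟨k, hk, htk⟩ :=
      exists_le_abs_sub_of_rank_le_card_notMem (x := fun j => X j ω) hK hω.1 hω.2 hθK hθ0 hbad
    rw [one_le_div (by positivity)]
    calc t ^ (2 * q) ≤ |X k ω - θ k| ^ (2 * q) := pow_le_pow_left₀ ht.le htk _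
      _ = (X k ω - θ k) ^ (2 * q) := (even_two_mul q).pow_abs _
      _ ≤ _ := Finset.single_le_sum (f := fun j => (X j ω - θ j) ^ (2 * q))
          (fun j _ => hev _ _) hk
  · rw [integral_sum_sub_pow_div hX]
    gcongr
    exact integral_sum_pow_le hX hθA _

end

lemma tendsto_pow_div_natCast_atTop (C : ℝ) {k : ℕ} (hk : k ≠ 0) :
    Tendsto (fun n : ℕ => C / (n : ℝ) ^ k) atTop (nhds 0) :=
  tendsto_const_nhds.div_atTop ((tendsto_pow_atTop hk).comp tendsto_natCast_atTop_atTop)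

lemma tendsto_young_bound (a M B M' δ : ℝ) (m : ℕ) :
    Tendsto (fun n : ℕ =>
      ((n : ℝ) ^ (2 * m + 2))⁻¹ * (n * (a * (M + (√n * B) ^ (2 * (2 * m))))) +
      (4 * ((n : ℝ) ^ (2 * m + 2))⁻¹)⁻¹ * (n * M' / (√n * δ) ^ (2 * (2 * m + 4))))
      atTop (nhds 0) := by
  have hlim := (tendsto_pow_div_natCast_atTop (a * M) (k := 2 * m + 1) (by omega)).add
    (tendsto_pow_div_natCast_atTop (a * B ^ (2 * (2 * m)) + M' / (4 * δ ^ (2 * (2 * m + 4))))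
      (k := 1) one_ne_zero)
  rw [add_zero] at hlim
  refine hlim.congr' ?_
  filter_upwards [eventually_gt_atTop 0] with n hn
  have hn' : (0 : ℝ) < n := by exact_mod_cast hn
  simp only [mul_pow, pow_mul, sq_sqrt hn'.le]
  field_simp
  ring

lemma abs_sqrt_mul_div {x b σ : ℝ} (hσ : 0 < σ) : |√x * b / σ| = √x * (|b| / σ) := by
  rw [abs_div, abs_mul, abs_of_nonneg (sqrt_nonneg _), abs_of_pos hσ, mul_div_assoc]

lemma abs_sqrt_mul_div_le {x b B σ : ℝ} (hσ : 0 < σ) (h : |b| ≤ B) :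
    |√x * b / σ| ≤ √x * (B / σ) := by
  rw [abs_sqrt_mul_div hσ]
  gcongr

lemma le_abs_sqrt_mul_div {x b B σ : ℝ} (hσ : 0 < σ) (h : B ≤ |b|) :
    √x * (B / σ) ≤ |√x * b / σ| := by
  rw [abs_sqrt_mul_div hσ]
  gcongr

theorem expectation_max_on_complement_Estar_tendsto_zero_general
    {Ω : Type*} [MeasureSpace Ω] [IsProbabilityMeasure (ℙ : Measure Ω)]
    (σ : ℝ) (hσ : 0 < σ)
    (Kstar : Finset ℕ) (hKne : Kstar.Nonempty) (hKpos : ∀ j ∈ Kstar, 1 ≤ j)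
    (β : ℕ → ℝ) (hβ : ∀ j, β j ≠ 0 ↔ j ∈ Kstar)
    (c : ℕ → ℕ → Ω → ℝ) (hmeas : ∀ n j, Measurable (c n j))
    (hdist : ∀ n, Kstar.max' hKne < n → ∀ j ∈ Finset.Icc 1 n,
      Measure.map (c n j) ℙ = gaussianReal (Real.sqrt n * β j / σ) 1)
    (p : ℕ → Ω → ℕ → ℕ) (hpmeas : ∀ n l, Measurable fun ω => p n ω l)
    (hp : ∀ n, Kstar.max' hKne < n → ∀ᵐ ω ∂ℙ,
      Set.BijOn (p n ω) (Set.Icc 1 n) (Set.Icc 1 n) ∧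
      ∀ l ∈ Set.Icc 1 n, ∀ r ∈ Set.Icc 1 n, l < r →
        |c n (p n ω r) ω| < |c n (p n ω l) ω|)
    (m : ℕ) :
    Tendsto
      (fun n : ℕ =>
        ∫ ω in {ω | ∃ l ∈ Set.Icc 1 Kstar.card, p n ω l ∉ Kstar},
          (c n (p n ω 1) ω) ^ (2 * m) ∂ℙ)
      atTop (nhds 0) := by
  have hβ0 (j : ℕ) (hj : j ∉ Kstar) : β j = 0 := by_contra fun h => hj ((hβ j).mp h)
  obtain ⟨jmin, hjmin, hmin⟩ := Kstar.exists_min_image (fun j => |β j|) hKne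
  obtain ⟨jmax, -, hmax⟩ := Kstar.exists_max_image (fun j => |β j|) hKne
  have hmax' (j : ℕ) : |β j| ≤ |β jmax| := by
    by_cases hj : j ∈ Kstar
    · exact hmax j hj
    · simp [hβ0 j hj]
  have hβmin : 0 < |β jmin| := abs_pos.mpr ((hβ jmin).mpr hjmin)
  refine squeeze_zero' (Eventually.of_forall fun n => integral_nonneg fun ω =>
    (even_two_mul m).pow_nonneg _) ?_
    (tendsto_young_bound (2 ^ (2 * (2 * m) - 1)) (∫ x, x ^ (2 * (2 * m)) ∂gaussianReal 0 1)
      (|β jmax| / σ) (∫ x, x ^ (2 * (2 * m + 4)) ∂gaussianReal 0 1) (|β jmin| / σ / 2) m)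
  filter_upwards [eventually_gt_atTop (Kstar.max' hKne)] with n hn
  have hK : Kstar ⊆ Finset.Icc 1 n := fun j hj =>
    Finset.mem_Icc.mpr ⟨hKpos j hj, (Kstar.le_max' j hj).trans hn.le⟩
  have hn1 : 1 ≤ n := (hKpos _ hjmin).trans ((Kstar.le_max' _ hjmin).trans hn.le)
  refine setIntegral_pow_rank_notMem_le hn1 hK (hmeas n)
    (fun j hj => ⟨(hmeas n j).aemeasurable, hdist n hn j hj⟩) (by positivity)
    (fun j hj => ?_) (fun j hj => by simp [hβ0 j hj])
    (fun j _ => abs_sqrt_mul_div_le hσ (hmax' j)) (hpmeas n) (hp n hn) m (2 * m + 4)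
    (by positivity)
  rw [show 2 * (√n * (|β jmin| / σ / 2)) = √n * (|β jmin| / σ) by ring]
  exact le_abs_sqrt_mul_div hσ (hmin j hj)

/-- For each fixed positive integer `m`, the expectation of `c̃_{p₁}^{2m}` (the `2m`-th power
of the coefficient with the largest absolute value) restricted to the complement of the
event `E_n* = ⋂_{l=1}^{k*} {p_l ∈ K*}` tends to zero as `n → ∞`. -/
theorem expectation_max_on_complement_Estar_tendsto_zero
    {Ω : Type*} [MeasureSpace Ω] [IsProbabilityMeasure (ℙ : Measure Ω)]
    (σ : ℝ) (hσ : 0 < σ)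
    (Kstar : Finset ℕ) (hKne : Kstar.Nonempty) (hKpos : ∀ j ∈ Kstar, 1 ≤ j)
    (β : ℕ → ℝ) (hβ : ∀ j, β j ≠ 0 ↔ j ∈ Kstar)
    (c : ℕ → ℕ → Ω → ℝ) (hmeas : ∀ n j, Measurable (c n j))
    (hdist : ∀ n, Kstar.max' hKne < n → ∀ j ∈ Finset.Icc 1 n,
      Measure.map (c n j) ℙ = gaussianReal (Real.sqrt n * β j / σ) 1)
    (hindep : ∀ n, Kstar.max' hKne < n →
      iIndepFun
        (fun j : (Finset.Icc 1 n : Finset ℕ) => c n (j : ℕ)) ℙ)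
    (p : ℕ → Ω → ℕ → ℕ) (hpmeas : ∀ n l, Measurable fun ω => p n ω l)
    (hp : ∀ n, Kstar.max' hKne < n → ∀ᵐ ω ∂ℙ,
      Set.BijOn (p n ω) (Set.Icc 1 n) (Set.Icc 1 n) ∧
      ∀ l ∈ Set.Icc 1 n, ∀ r ∈ Set.Icc 1 n, l < r →
        |c n (p n ω r) ω| < |c n (p n ω l) ω|)
    (m : ℕ) (hm : 1 ≤ m) :
    Tendsto
      (fun n : ℕ =>
        ∫ ω in {ω | ∃ l ∈ Set.Icc 1 Kstar.card, p n ω l ∉ Kstar},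
          (c n (p n ω 1) ω) ^ (2 * m) ∂ℙ)
      atTop (nhds 0) :=
  expectation_max_on_complement_Estar_tendsto_zero_general σ hσ Kstar hKne hKpos β hβ c hmeas hdist
    p hpmeas hp m
end

section
/- Fix an integer k ≥ k* (used as the threshold index for all n with n > k) and a fixed positive integer m. Then E[ θ̃_k^{2m} ] ≤ (2 log n)^m for all sufficiently large n. -/
set_option autoImplicit false

open MeasureTheory ProbabilityTheory Filter Real

/-!
Among the `k + 1` largest `|c̃ⱼ|` at least one has `j ∉ K*`, so `θ̃ₖ` is dominated by one of the
null coordinates, which are standard Gaussians. Since `a ^ r ≤ T ^ r + r a ^ (r - 1) (a - T)₊`,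
a union bound gives `E[θ̃ₖ ^ 2m] ≤ T ^ 2m + 2m n E[|Z| ^ (2m - 1) (|Z| - T)₊]`. Beyond `T` the
function `t ^ q e^{-t²/2}` decays at least like `e^{-T (t - T) / 2}` when `2q ≤ T²`, so the tail
expectation is at most `4 T ^ (2m - 3) e^{-T²/2}`. For `T² = 2 log n - 2` we get
`n e^{-T²/2} = e`, and once `T ≥ 4e` the error `8me T ^ (2m - 3)` is absorbed by Bernoulli's
inequality `(T² + 2) ^ m ≥ T ^ 2m + 2m T ^ (2m - 2)`.
-/

lemma pow_le_pow_add_mul_max_sub {a T : ℝ} (ha : 0 ≤ a) (hT : 0 ≤ T) (n : ℕ) :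
    a ^ n ≤ T ^ n + n * a ^ (n - 1) * max (a - T) 0 := by
  rcases le_total a T with haT | hTa
  · have : a ^ n ≤ T ^ n := pow_le_pow_left₀ ha haT n
    have : 0 ≤ (n : ℝ) * a ^ (n - 1) * max (a - T) 0 := by positivity
    linarith
  · have h := (le_abs_self _).trans (abs_pow_sub_pow_le (a := a) (b := T) (n := n))
    rw [abs_of_nonneg (sub_nonneg.2 hTa), abs_of_nonneg ha, abs_of_nonneg hT,
      max_eq_left hTa] at h
    rw [max_eq_left (sub_nonneg.2 hTa)]
    linarith

lemma pow_mul_exp_neg_sq_le {q : ℕ} {T s : ℝ} (hT : 0 < T) (hq : 2 * q ≤ T ^ 2) (hs : 0 ≤ s) :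
    (T + s) ^ q * exp (-(T + s) ^ 2 / 2) ≤ T ^ q * exp (-T ^ 2 / 2) * exp (-(T / 2 * s)) := by
  have hpow : (T + s) ^ q ≤ T ^ q * exp (q * (s / T)) := by
    calc (T + s) ^ q = (T * (s / T + 1)) ^ q := by field_simp; ring
      _ ≤ (T * exp (s / T)) ^ q := by gcongr; exact add_one_le_exp _
      _ = T ^ q * exp (q * (s / T)) := by rw [mul_pow, ← exp_nat_mul]
  have hexp : q * (s / T) - (T + s) ^ 2 / 2 ≤ -T ^ 2 / 2 - T / 2 * s := by
    have : q * (s / T) ≤ T / 2 * s := by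
      rw [← mul_div_assoc, div_le_iff₀ hT]; nlinarith
    nlinarith [sq_nonneg s]
  calc (T + s) ^ q * exp (-(T + s) ^ 2 / 2)
      ≤ T ^ q * exp (q * (s / T)) * exp (-(T + s) ^ 2 / 2) := by gcongr
    _ = T ^ q * exp (q * (s / T) - (T + s) ^ 2 / 2) := by rw [mul_assoc, ← exp_add]; ring_nf
    _ ≤ T ^ q * exp (-T ^ 2 / 2 - T / 2 * s) := by gcongr
    _ = T ^ q * exp (-T ^ 2 / 2) * exp (-(T / 2 * s)) := by
      rw [mul_assoc, ← exp_add]; ring_nf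

noncomputable def expWeight (l : ℝ) : ℝ → ℝ := (Set.Ioi 0).indicator fun s => s * exp (-(l * s))

lemma expWeight_nonneg (l s : ℝ) : 0 ≤ expWeight l s :=
  Set.indicator_nonneg (fun _ hs => mul_nonneg (le_of_lt hs) (exp_pos _).le) s

lemma integral_expWeight {l : ℝ} (hl : 0 < l) : ∫ s, expWeight l s = 1 / l ^ 2 := by
  have h := integral_rpow_mul_exp_neg_mul_Ioi two_pos hl
  norm_num [Gamma_two] at h
  rw [expWeight, integral_indicator measurableSet_Ioi, h]
  ring

lemma integrable_expWeight {l : ℝ} (hl : 0 < l) : Integrable (expWeight l) :=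
  .of_integral_ne_zero (by rw [integral_expWeight hl]; positivity)

lemma pow_mul_max_sub_mul_exp_le {q : ℕ} {T : ℝ} (hT : 0 < T) (hq : 2 * q ≤ T ^ 2) (t : ℝ) :
    t ^ q * max (t - T) 0 * exp (-t ^ 2 / 2)
      ≤ T ^ q * exp (-T ^ 2 / 2) * expWeight (T / 2) (t - T) := by
  rcases le_or_gt t T with htT | hTt
  · rw [max_eq_right (sub_nonpos.2 htT), mul_zero, zero_mul]
    exact mul_nonneg (by positivity) (expWeight_nonneg _ _)
  · have hs : 0 < t - T := sub_pos.2 hTt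
    have h := pow_mul_exp_neg_sq_le (q := q) hT hq hs.le
    rw [add_sub_cancel] at h
    rw [expWeight, Set.indicator_of_mem (show t - T ∈ Set.Ioi 0 from hs), max_eq_left hs.le]
    calc t ^ q * (t - T) * exp (-t ^ 2 / 2) = (t - T) * (t ^ q * exp (-t ^ 2 / 2)) := by ring
      _ ≤ (t - T) * (T ^ q * exp (-T ^ 2 / 2) * exp (-(T / 2 * (t - T)))) := by gcongr
      _ = _ := by ring

lemma integrable_pow_abs_mul_max_sub_gaussianReal (q : ℕ) {T : ℝ} (hT : 0 ≤ T) (μ : ℝ)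
    (v : NNReal) : Integrable (fun x => |x| ^ q * max (|x| - T) 0) (gaussianReal μ v) := by
  refine ((memLp_id_gaussianReal' (q + 1 : ℕ) (by simp)).integrable_norm_pow').mono (by fun_prop)
    (ae_of_all _ fun x => ?_)
  have hmax : max (|x| - T) 0 ≤ |x| := max_le (by linarith) (abs_nonneg x)
  simp only [id, norm_eq_abs, abs_mul, abs_pow, abs_abs, abs_of_nonneg (le_max_right (|x| - T) 0)]
  calc |x| ^ q * max (|x| - T) 0 ≤ |x| ^ q * |x| := by gcongr
    _ = |x| ^ (q + 1) := (pow_succ _ _).symm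

lemma integral_pow_abs_mul_max_sub_gaussianReal_le {q : ℕ} {T : ℝ} (hT : 0 < T)
    (hq : 2 * q ≤ T ^ 2) :
    ∫ x, |x| ^ q * max (|x| - T) 0 ∂gaussianReal 0 1 ≤ 4 / T ^ 2 * T ^ q * exp (-T ^ 2 / 2) := by
  set C := T ^ q * exp (-T ^ 2 / 2) with hC
  set ψ : ℝ → ℝ := fun x => expWeight (T / 2) (x - T) + expWeight (T / 2) (-T - x)
  have hT2 : 0 < T / 2 := half_pos hT
  have hψ_int : Integrable ψ :=
    ((integrable_expWeight hT2).comp_sub_right T).add ((integrable_expWeight hT2).comp_sub_left _)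
  have hψ : ∫ x, ψ x = 8 / T ^ 2 := by
    rw [integral_add ((integrable_expWeight hT2).comp_sub_right T)
      ((integrable_expWeight hT2).comp_sub_left _), integral_sub_right_eq_self,
      integral_sub_left_eq_self, integral_expWeight hT2]
    ring
  have hbound : ∀ x, gaussianPDFReal 0 1 x • (|x| ^ q * max (|x| - T) 0)
      ≤ (√(2 * π))⁻¹ * C * ψ x := by
    intro x
    have hψx : expWeight (T / 2) (|x| - T) ≤ ψ x := by
      rcases abs_cases x with ⟨hx, -⟩ | ⟨hx, -⟩
      · rw [hx]; exact le_add_of_nonneg_right (expWeight_nonneg _ _)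
      · rw [hx, neg_sub_comm]; exact le_add_of_nonneg_left (expWeight_nonneg _ _)
    have h := pow_mul_max_sub_mul_exp_le hT hq |x|
    rw [sq_abs] at h
    simp only [gaussianPDFReal, NNReal.coe_one, mul_one, sub_zero, smul_eq_mul]
    calc (√(2 * π))⁻¹ * exp (-x ^ 2 / 2) * (|x| ^ q * max (|x| - T) 0)
        = (√(2 * π))⁻¹ * (|x| ^ q * max (|x| - T) 0 * exp (-x ^ 2 / 2)) := by ring
      _ ≤ (√(2 * π))⁻¹ * (C * ψ x) := mul_le_mul_of_nonneg_left
        (h.trans (mul_le_mul_of_nonneg_left hψx (by positivity))) (by positivity)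
      _ = _ := by ring
  have hsqrt : 2 ≤ √(2 * π) := (le_sqrt zero_le_two (by positivity)).2 (by linarith [pi_gt_three])
  rw [integral_gaussianReal_eq_integral_smul one_ne_zero]
  calc ∫ x, gaussianPDFReal 0 1 x • (|x| ^ q * max (|x| - T) 0)
      ≤ ∫ x, (√(2 * π))⁻¹ * C * ψ x :=
        integral_mono_of_nonneg (ae_of_all _ fun x => smul_nonneg (gaussianPDFReal_nonneg 0 1 x)
          (by positivity)) (hψ_int.const_mul _) (ae_of_all _ hbound)
    _ = (√(2 * π))⁻¹ * (8 / T ^ 2 * C) := by rw [integral_const_mul, hψ]; ring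
    _ ≤ 2⁻¹ * (8 / T ^ 2 * C) := by gcongr
    _ = 4 / T ^ 2 * T ^ q * exp (-T ^ 2 / 2) := by rw [hC]; ring

lemma integral_abs_pow_le_of_ae_exists_abs_le_gaussian {Ω : Type*} [MeasurableSpace Ω]
    {P : Measure Ω} [IsProbabilityMeasure P] {Y : ℕ → Ω → ℝ} {S : Finset ℕ} {X : Ω → ℝ}
    (hY : ∀ j ∈ S, Measurable (Y j)) (hlaw : ∀ j ∈ S, P.map (Y j) = gaussianReal 0 1)
    (hX : ∀ᵐ ω ∂P, ∃ j ∈ S, |X ω| ≤ |Y j ω|) (r : ℕ) {T : ℝ} (hT : 0 < T)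
    (hq : 2 * ((r - 1 : ℕ) : ℝ) ≤ T ^ 2) :
    ∫ ω, |X ω| ^ r ∂P
      ≤ T ^ r + r * (S.card * (4 / T ^ 2 * T ^ (r - 1) * exp (-T ^ 2 / 2))) := by
  set h : ℝ → ℝ := fun x => |x| ^ (r - 1) * max (|x| - T) 0 with hh
  have hh_meas : Measurable h := by fun_prop
  have hint : ∀ j ∈ S, Integrable (fun ω => h (Y j ω)) P := fun j hj =>
    (integrable_map_measure hh_meas.aestronglyMeasurable (hY j hj).aemeasurable).1
      (hlaw j hj ▸ integrable_pow_abs_mul_max_sub_gaussianReal _ hT.le 0 1)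
  have hE : ∀ j ∈ S, ∫ ω, h (Y j ω) ∂P ≤ 4 / T ^ 2 * T ^ (r - 1) * exp (-T ^ 2 / 2) :=
    fun j hj => by
      rw [← integral_map (hY j hj).aemeasurable hh_meas.aestronglyMeasurable, hlaw j hj]
      exact integral_pow_abs_mul_max_sub_gaussianReal_le hT hq
  have hpt : ∀ᵐ ω ∂P, |X ω| ^ r ≤ T ^ r + r * ∑ j ∈ S, h (Y j ω) := by
    filter_upwards [hX] with ω ⟨j, hj, hXj⟩
    have hpow := pow_le_pow_add_mul_max_sub (abs_nonneg (Y j ω)) hT.le r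
    calc |X ω| ^ r ≤ |Y j ω| ^ r := by gcongr
      _ ≤ T ^ r + r * h (Y j ω) := by rw [hh, ← mul_assoc]; exact hpow
      _ ≤ T ^ r + r * ∑ j ∈ S, h (Y j ω) := by
        gcongr
        exact Finset.single_le_sum (f := fun i => h (Y i ω)) (fun i _ => by positivity) hj
  calc ∫ ω, |X ω| ^ r ∂P ≤ ∫ ω, (T ^ r + r * ∑ j ∈ S, h (Y j ω)) ∂P :=
        integral_mono_of_nonneg (ae_of_all _ fun ω => by positivity)
          ((integrable_const _).add ((integrable_finsetSum S hint).const_mul _)) hpt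
    _ = T ^ r + r * ∑ j ∈ S, ∫ ω, h (Y j ω) ∂P := by
        rw [integral_add (integrable_const _) ((integrable_finsetSum S hint).const_mul _),
          integral_const, integral_const_mul, integral_finsetSum S hint]
        simp
    _ ≤ T ^ r + r * ∑ _j ∈ S, 4 / T ^ 2 * T ^ (r - 1) * exp (-T ^ 2 / 2) := by
        gcongr with j hj
        exact hE j hj
    _ = _ := by rw [Finset.sum_const, nsmul_eq_mul]

lemma exists_mem_filter_notMem_le_of_antitoneOn {α : Type*} [Preorder α] {f : ℕ → α}
    {p : ℕ → ℕ} {n k : ℕ} {K : Finset ℕ} (hmaps : Set.MapsTo p (Set.Icc 1 n) (Set.Icc 1 n))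
    (hinj : Set.InjOn p (Set.Icc 1 n)) (hanti : AntitoneOn (f ∘ p) (Set.Icc 1 n))
    (hK : K.card ≤ k) (hkn : k + 1 ≤ n) :
    ∃ j ∈ {j ∈ Finset.Icc 1 n | j ∉ K}, f (p (k + 1)) ≤ f j := by
  have hsub : Set.Icc 1 (k + 1) ⊆ Set.Icc 1 n := Set.Icc_subset_Icc_right hkn
  have hcard : K.card < ((Finset.Icc 1 (k + 1)).image p).card := by
    rw [Finset.card_image_of_injOn (hinj.mono (by simpa using hsub)), Nat.card_Icc]
    omega
  obtain ⟨j, hj, hjK⟩ := Finset.exists_mem_notMem_of_card_lt_card hcard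
  obtain ⟨l, hl, rfl⟩ := Finset.mem_image.1 hj
  have hl' : l ∈ Set.Icc 1 (k + 1) := by simpa using hl
  refine ⟨p l, Finset.mem_filter.2 ⟨by simpa using hmaps (hsub hl'), hjK⟩, ?_⟩
  exact hanti (hsub hl') (hsub (Set.right_mem_Icc.2 (by omega))) hl'.2

lemma pow_add_mul_tail_le_two_mul_log_pow (m : ℕ) {x T : ℝ} (hx : 0 < x) (hT : 4 * exp 1 ≤ T)
    (hTx : T ^ 2 = 2 * log x - 2) :
    T ^ (2 * m) + 2 * m * (x * (4 / T ^ 2 * T ^ (2 * m - 1) * exp (-T ^ 2 / 2)))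
      ≤ (2 * log x) ^ m := by
  have hT0 : 0 < T := lt_of_lt_of_le (by positivity) hT
  have hexp : x * exp (-T ^ 2 / 2) = exp 1 := by
    rw [show -T ^ 2 / 2 = 1 - log x by rw [hTx]; ring, exp_sub, exp_log hx]
    field_simp
  have hpow : (m : ℝ) * (T ^ (2 * m - 1) * T) = m * T ^ (2 * m) := by
    rcases m with _ | m
    · simp
    · rw [← pow_succ, show 2 * (m + 1) - 1 + 1 = 2 * (m + 1) by omega]
  have htail : 2 * m * (x * (4 / T ^ 2 * T ^ (2 * m - 1) * exp (-T ^ 2 / 2)))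
      ≤ 2 * m * T ^ (2 * m) / T ^ 2 := by
    calc 2 * m * (x * (4 / T ^ 2 * T ^ (2 * m - 1) * exp (-T ^ 2 / 2)))
        = 2 * (4 * exp 1 * (m * T ^ (2 * m - 1))) / T ^ 2 := by rw [← hexp]; ring
      _ ≤ 2 * (T * (m * T ^ (2 * m - 1))) / T ^ 2 := by gcongr
      _ = 2 * m * T ^ (2 * m) / T ^ 2 := by linear_combination (2 / T ^ 2) * hpow
  have hbern : (T ^ 2) ^ m * (1 + m * (2 / T ^ 2)) ≤ (T ^ 2) ^ m * (1 + 2 / T ^ 2) ^ m := by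
    gcongr
    exact one_add_mul_le_pow (by linarith [show 0 < 2 / T ^ 2 by positivity]) m
  calc T ^ (2 * m) + 2 * m * (x * (4 / T ^ 2 * T ^ (2 * m - 1) * exp (-T ^ 2 / 2)))
      ≤ (T ^ 2) ^ m * (1 + m * (2 / T ^ 2)) := by
        rw [← pow_mul]; field_simp; field_simp at htail; linarith
    _ ≤ (T ^ 2) ^ m * (1 + 2 / T ^ 2) ^ m := hbern
    _ = (2 * log x) ^ m := by
        rw [← mul_pow, mul_add, mul_one, mul_div_cancel₀ _ (by positivity), hTx]; ring_nf

theorem threshold_moment_bound_general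
    {Ω : Type*} [MeasureSpace Ω] [IsProbabilityMeasure (ℙ : Measure Ω)]
    (σ : ℝ)
    (Kstar : Finset ℕ) (hKne : Kstar.Nonempty)
    (β : ℕ → ℝ) (hβ : ∀ j, β j ≠ 0 ↔ j ∈ Kstar)
    (c : ℕ → ℕ → Ω → ℝ) (hmeas : ∀ n j, Measurable (c n j))
    (hdist : ∀ n, Kstar.max' hKne < n → ∀ j ∈ Finset.Icc 1 n,
      Measure.map (c n j) ℙ = gaussianReal (Real.sqrt n * β j / σ) 1)
    (p : ℕ → Ω → ℕ → ℕ)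
    (hp : ∀ n, Kstar.max' hKne < n → ∀ᵐ ω ∂ℙ,
      Set.BijOn (p n ω) (Set.Icc 1 n) (Set.Icc 1 n) ∧
      ∀ l ∈ Set.Icc 1 n, ∀ r ∈ Set.Icc 1 n, l < r →
        |c n (p n ω r) ω| < |c n (p n ω l) ω|)
    (k : ℕ) (hk : Kstar.card ≤ k) (m : ℕ) :
    ∃ N : ℕ, ∀ n ≥ N,
      ∫ ω, (c n (p n ω (k + 1)) ω) ^ (2 * m) ∂ℙ ≤ (2 * Real.log n) ^ m := by
  obtain ⟨N, hN⟩ := eventually_atTop.1 <| (eventually_gt_atTop (Kstar.max' hKne)).and <|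
    (eventually_ge_atTop (k + 1)).and <|
      (tendsto_log_atTop.comp tendsto_natCast_atTop_atTop).eventually_ge_atTop (62 + 2 * m)
  refine ⟨N, fun n hn => ?_⟩
  obtain ⟨hKn, hkn, hlog : 62 + 2 * (m : ℝ) ≤ log n⟩ := hN n hn
  set S := {j ∈ Finset.Icc 1 n | j ∉ Kstar}
  have hlaw : ∀ j ∈ S, Measure.map (c n j) ℙ = gaussianReal 0 1 := fun j hj => by
    obtain ⟨hjn, hjK⟩ := Finset.mem_filter.1 hj
    simpa [not_not.1 (mt (hβ j).1 hjK)] using hdist n hKn j hjn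
  have hdom : ∀ᵐ ω ∂ℙ, ∃ j ∈ S, |c n (p n ω (k + 1)) ω| ≤ |c n j ω| := by
    filter_upwards [hp n hKn] with ω ⟨hbij, hord⟩
    exact exists_mem_filter_notMem_le_of_antitoneOn (f := fun j => |c n j ω|) hbij.mapsTo
      hbij.injOn (StrictAntiOn.antitoneOn hord) hk hkn
  have hS : (S.card : ℝ) ≤ n := by exact_mod_cast (Finset.card_filter_le _ _).trans (by simp)
  set T := √(2 * log n - 2)
  have hT2 : T ^ 2 = 2 * log n - 2 := sq_sqrt (by linarith)
  have hT : 4 * exp 1 ≤ T := (by linarith [exp_one_lt_d9] : 4 * exp 1 ≤ 11).trans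
    ((le_sqrt (by norm_num) (by linarith)).2 (by linarith))
  have hq : 2 * ((2 * m - 1 : ℕ) : ℝ) ≤ T ^ 2 := by
    have : ((2 * m - 1 : ℕ) : ℝ) ≤ 2 * m := by exact_mod_cast Nat.sub_le _ _
    linarith
  calc ∫ ω, (c n (p n ω (k + 1)) ω) ^ (2 * m) ∂ℙ
      = ∫ ω, |c n (p n ω (k + 1)) ω| ^ (2 * m) ∂ℙ := by simp only [(even_two_mul m).pow_abs]
    _ ≤ T ^ (2 * m)
          + (2 * m : ℕ) * (S.card * (4 / T ^ 2 * T ^ (2 * m - 1) * exp (-T ^ 2 / 2))) :=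
        integral_abs_pow_le_of_ae_exists_abs_le_gaussian (fun j _ => hmeas n j) hlaw hdom _
          (by linarith [exp_pos 1]) hq
    _ ≤ T ^ (2 * m) + 2 * m * (n * (4 / T ^ 2 * T ^ (2 * m - 1) * exp (-T ^ 2 / 2))) := by
        push_cast; gcongr
    _ ≤ _ := pow_add_mul_tail_le_two_mul_log_pow m (by exact_mod_cast (by omega : 0 < n)) hT hT2

/-- For a fixed threshold index `k ≥ k*` and a fixed positive integer `m`, the `2m`-th moment
of the LARS threshold `θ̃_k = |c̃_{p_{k+1}}|` (the `(k+1)`-th largest absolute coefficient)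
satisfies `E[θ̃_k^{2m}] ≤ (2 log n)^m` for all sufficiently large `n`. -/
theorem threshold_moment_bound
    {Ω : Type*} [MeasureSpace Ω] [IsProbabilityMeasure (ℙ : Measure Ω)]
    (σ : ℝ) (hσ : 0 < σ)
    (Kstar : Finset ℕ) (hKne : Kstar.Nonempty) (hKpos : ∀ j ∈ Kstar, 1 ≤ j)
    (β : ℕ → ℝ) (hβ : ∀ j, β j ≠ 0 ↔ j ∈ Kstar)
    (c : ℕ → ℕ → Ω → ℝ) (hmeas : ∀ n j, Measurable (c n j))
    (hdist : ∀ n, Kstar.max' hKne < n → ∀ j ∈ Finset.Icc 1 n,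
      Measure.map (c n j) ℙ = gaussianReal (Real.sqrt n * β j / σ) 1)
    (hindep : ∀ n, Kstar.max' hKne < n →
      iIndepFun
        (fun j : (Finset.Icc 1 n : Finset ℕ) => c n (j : ℕ)) ℙ)
    (p : ℕ → Ω → ℕ → ℕ) (hpmeas : ∀ n l, Measurable fun ω => p n ω l)
    (hp : ∀ n, Kstar.max' hKne < n → ∀ᵐ ω ∂ℙ,
      Set.BijOn (p n ω) (Set.Icc 1 n) (Set.Icc 1 n) ∧
      ∀ l ∈ Set.Icc 1 n, ∀ r ∈ Set.Icc 1 n, l < r →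
        |c n (p n ω r) ω| < |c n (p n ω l) ω|)
    (k : ℕ) (hk : Kstar.card ≤ k) (m : ℕ) (hm : 1 ≤ m) :
    ∃ N : ℕ, ∀ n ≥ N,
      ∫ ω, (c n (p n ω (k + 1)) ω) ^ (2 * m) ∂ℙ ≤ (2 * Real.log n) ^ m :=
  threshold_moment_bound_general σ Kstar hKne β hβ c hmeas hdist p hp k hk m
end
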